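/- arXiv:quant-ph/0511147 — 11 statements merged into one kernel-verified Lean document; each statement's English description precedes it below -/
import Mathlib

section
/- Let n be an odd natural number with n ≥ 3. Then every finite simple graph G on n vertices whose adjacency matrix over ℝ is invertible has at least (n+3)/2 edges, and there exists a simple graph on n vertices with exactly (n+3)/2 edges whose adjacency matrix over ℝ is invertible (a triangle together with (n-3)/2 disjoint edges). -/
/-!
A nonsingular adjacency matrix has no zero row and no two equal rows: every vertex has a
neighbour and no two vertices have the same neighbourhood. For odd `n`, `2|E| = ∑ deg ≥ n` is
even, so `2|E| ≥ n + 1`; and if `2|E| = n + 1`, the degrees exceed `1` by a total of one, so a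
single vertex of degree `2` carries two leaves with the same neighbourhood. Hence `2|E| ≥ n + 3`.

A disjoint union of cliques on the fibres of a map `f` is nonsingular as soon as every fibre has
at least two points: if `A x = 0`, then `x u` is the sum `S` of `x` over the fibre of `u`, and
summing this over a fibre of size `s` gives `S = s S`, so `S = 0`. A triangle together with
`(n - 3) / 2` disjoint edges is such a union.
-/

open Finset

namespace SimpleGraph

section Nonsingular

variable {V : Type*} [Fintype V] (G : SimpleGraph V) [DecidableRel G.Adj]

theorem neighborFinset_eq_singleton_of_degree_eq_one {v w : V} (hadj : G.Adj w v)
    (hw : G.degree w = 1) : G.neighborFinset w = {v} :=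
  eq_singleton_iff_unique_mem.2 ⟨(G.mem_neighborFinset _ _).2 hadj, fun _ hx =>
    card_le_one.1 hw.le _ hx _ ((G.mem_neighborFinset _ _).2 hadj)⟩

variable [DecidableEq V] {R : Type*} [CommRing R] [Nontrivial R]

theorem degree_pos_of_isUnit_adjMatrix (h : IsUnit (G.adjMatrix R)) (v : V) :
    0 < G.degree v := by
  rw [degree_pos_iff_exists_adj]
  by_contra! hv
  refine ((Matrix.isUnit_iff_isUnit_det _).1 h).ne_zero (Matrix.det_eq_zero_of_row_eq_zero v ?_)
  simp [hv]

theorem neighborFinset_injective_of_isUnit_adjMatrix (h : IsUnit (G.adjMatrix R)) :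
    Function.Injective fun v => G.neighborFinset v := by
  intro a b hab
  by_contra hne
  have hrow : G.adjMatrix R a = G.adjMatrix R b := by
    ext w
    simp only [adjMatrix_apply, ← mem_neighborFinset, hab]
  exact ((Matrix.isUnit_iff_isUnit_det _).1 h).ne_zero (Matrix.det_zero_of_row_eq hne hrow)

theorem sum_degrees_ne_card_add_one (hpos : ∀ v, 0 < G.degree v)
    (hinj : Function.Injective fun v => G.neighborFinset v) :
    ∑ v, G.degree v ≠ Fintype.card V + 1 := by
  intro hsum
  have hexcess : ∑ v, (G.degree v - 1) = 1 := by
    rw [sum_tsub_distrib _ fun v _ => hpos v, hsum, sum_const, card_univ, smul_eq_mul, mul_one]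
    omega
  obtain ⟨v, -, hv⟩ := exists_ne_zero_of_sum_ne_zero (hexcess ▸ one_ne_zero)
  have hleaf : ∀ w ≠ v, G.degree w = 1 := by
    intro w hwv
    have := sum_le_sum_of_subset (f := fun u => G.degree u - 1) (subset_univ {v, w})
    rw [sum_pair hwv.symm, hexcess] at this
    have := hpos w
    omega
  obtain ⟨a, ha, b, hb, hab⟩ := one_lt_card.1
    (show 1 < #(G.neighborFinset v) by rw [card_neighborFinset_eq_degree]; omega)
  rw [mem_neighborFinset] at ha hb
  refine hab (hinj (?_ : G.neighborFinset a = G.neighborFinset b))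
  rw [G.neighborFinset_eq_singleton_of_degree_eq_one ha.symm (hleaf a ha.ne'),
    G.neighborFinset_eq_singleton_of_degree_eq_one hb.symm (hleaf b hb.ne')]

theorem card_add_three_div_two_le_card_edgeFinset (h : IsUnit (G.adjMatrix R))
    (hodd : Odd (Fintype.card V)) : (Fintype.card V + 3) / 2 ≤ #G.edgeFinset := by
  have hge : Fintype.card V ≤ ∑ v, G.degree v := by
    simpa using card_nsmul_le_sum univ (fun v => G.degree v) 1 fun v _ =>
      G.degree_pos_of_isUnit_adjMatrix h v
  have hne := G.sum_degrees_ne_card_add_one (G.degree_pos_of_isUnit_adjMatrix h)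
    (G.neighborFinset_injective_of_isUnit_adjMatrix h)
  have := G.sum_degrees_eq_twice_card_edges
  obtain ⟨k, hk⟩ := hodd
  omega

end Nonsingular

def fiberGraph {V β : Type*} (f : V → β) : SimpleGraph V where
  Adj u v := u ≠ v ∧ f u = f v
  symm := ⟨fun _ _ h => ⟨h.1.symm, h.2.symm⟩⟩
  loopless := ⟨fun _ h => h.1 rfl⟩

section FiberGraph

variable {V β : Type*} [Fintype V] [DecidableEq V] [DecidableEq β] (f : V → β)
  [DecidableRel (fiberGraph f).Adj]

theorem neighborFinset_fiberGraph (u : V) :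
    (fiberGraph f).neighborFinset u = Finset.erase {v | f v = f u} u := by
  ext v
  rw [mem_neighborFinset, mem_erase, mem_filter, and_iff_right (mem_univ v)]
  exact ⟨fun h => ⟨h.1.symm, h.2.symm⟩, fun h => ⟨h.1.symm, h.2.symm⟩⟩

theorem degree_fiberGraph (u : V) : (fiberGraph f).degree u = #{v | f v = f u} - 1 := by
  rw [← card_neighborFinset_eq_degree, neighborFinset_fiberGraph, card_erase_of_mem (by simp)]

theorem isUnit_adjMatrix_fiberGraph {K : Type*} [Field K] [CharZero K]
    (hf : ∀ u, 2 ≤ #{v | f v = f u}) : IsUnit ((fiberGraph f).adjMatrix K) := by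
  rw [Matrix.isUnit_iff_isUnit_det, isUnit_iff_ne_zero]
  intro hdet
  obtain ⟨x, hx0, hx⟩ := Matrix.exists_mulVec_eq_zero_iff.2 hdet
  set S : V → K := fun u => ∑ v ∈ {v | f v = f u}, x v with hS
  have hxS : ∀ u, x u = S u := by
    intro u
    have := congrFun hx u
    rw [adjMatrix_mulVec_apply, neighborFinset_fiberGraph, sum_erase_eq_sub (by simp)] at this
    exact (sub_eq_zero.1 this).symm
  have hS0 : ∀ u, S u = 0 := by
    intro u
    have hscale : S u = #{v | f v = f u} * S u := by
      calc S u = ∑ v ∈ {v | f v = f u}, S v := sum_congr rfl fun v _ => hxS v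
        _ = ∑ v ∈ {v | f v = f u}, S u := sum_congr rfl fun v hv => by
          simp only [hS, (mem_filter.1 hv).2]
        _ = #{v | f v = f u} * S u := by rw [sum_const, nsmul_eq_mul]
    have hcard : (#{v | f v = f u} : K) - 1 ≠ 0 := by
      rw [sub_ne_zero]
      exact_mod_cast (show #{v | f v = f u} ≠ 1 by have := hf u; omega)
    have : ((#{v | f v = f u} : K) - 1) * S u = 0 := by linear_combination -hscale
    exact (mul_eq_zero.1 this).resolve_left hcard
  exact hx0 (funext fun u => (hxS u).trans (hS0 u))

end FiberGraph

-- Truncated subtraction puts `0, 1, 2` in fibre `0` (the triangle); the fibres `{3, 4}`,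
-- `{5, 6}`, … are the matching edges.
abbrev triangleMatching (n : ℕ) : SimpleGraph (Fin n) := fiberGraph fun u => (u.val - 1) / 2

theorem card_fiber_triangleMatching {n : ℕ} (hn : 3 ≤ n) (hodd : Odd n) (u : Fin n) :
    #{v : Fin n | (v.val - 1) / 2 = (u.val - 1) / 2} = if u.val < 3 then 3 else 2 := by
  obtain ⟨k, rfl⟩ := hodd
  split_ifs with hu
  · have hfiber (v : Fin (2 * k + 1)) : (v.val - 1) / 2 = (u.val - 1) / 2 ↔ v.val < 3 := by
      omega
    simp only [hfiber, Fin.card_filter_val_lt]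
    omega
  · rw [card_eq_two]
    refine ⟨⟨2 * ((u.val - 1) / 2) + 1, by omega⟩, ⟨2 * ((u.val - 1) / 2) + 2, by omega⟩, by simp, ?_⟩
    ext v
    simp only [mem_filter, mem_univ, true_and, mem_insert, mem_singleton, Fin.ext_iff]
    omega

theorem isUnit_adjMatrix_triangleMatching {n : ℕ} (hn : 3 ≤ n) (hodd : Odd n)
    [DecidableRel (triangleMatching n).Adj] {K : Type*} [Field K] [CharZero K] :
    IsUnit ((triangleMatching n).adjMatrix K) :=
  isUnit_adjMatrix_fiberGraph _ fun u => by
    rw [card_fiber_triangleMatching hn hodd]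
    split_ifs <;> norm_num

theorem card_edgeFinset_triangleMatching {n : ℕ} (hn : 3 ≤ n) (hodd : Odd n)
    [DecidableRel (triangleMatching n).Adj] :
    #(triangleMatching n).edgeFinset = (n + 3) / 2 := by
  have hdeg : ∑ u, (triangleMatching n).degree u = n + 3 :=
    calc ∑ u, (triangleMatching n).degree u
        = ∑ u : Fin n, (1 + if u.val < 3 then 1 else 0) := sum_congr rfl fun u _ => by
          rw [degree_fiberGraph, card_fiber_triangleMatching hn hodd]
          split_ifs <;> rfl
      _ = n + 3 := by
          simp only [sum_add_distrib, sum_const, card_univ, Fintype.card_fin, smul_eq_mul, mul_one,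
            sum_boole, Nat.cast_id, Fin.card_filter_val_lt]
          omega
  have := (triangleMatching n).sum_degrees_eq_twice_card_edges
  omega

end SimpleGraph

attribute [local instance] Classical.propDecidable

/-- For odd `n ≥ 3`: every simple graph on `n` vertices with invertible (real) adjacency
matrix has at least `(n+3)/2` edges, and some simple graph on `n` vertices with exactly
`(n+3)/2` edges has invertible adjacency matrix. -/
theorem min_edges_nonsingular_odd (n : ℕ) (hn : 3 ≤ n) (hodd : Odd n) :
    (∀ G : SimpleGraph (Fin n), IsUnit (G.adjMatrix ℝ) → (n + 3) / 2 ≤ G.edgeFinset.card) ∧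
    (∃ G : SimpleGraph (Fin n), G.edgeFinset.card = (n + 3) / 2 ∧ IsUnit (G.adjMatrix ℝ)) :=
  ⟨fun G hG => by simpa using G.card_add_three_div_two_le_card_edgeFinset hG (by simpa using hodd),
    SimpleGraph.triangleMatching n, SimpleGraph.card_edgeFinset_triangleMatching hn hodd,
    SimpleGraph.isUnit_adjMatrix_triangleMatching hn hodd⟩
end

section
/- For n ≥ 1, the adjacency matrix over ℝ of the path graph P_n on n vertices (vertices 0,...,n−1 with i adjacent to i+1) is invertible if and only if n is even. -/
attribute [local instance] Classical.propDecidable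

open Finset Matrix

noncomputable def extZ (n : ℕ) (x : Fin n → ℝ) (c : ℤ) : ℝ :=
  if h : 0 ≤ c ∧ c < n then x ⟨c.toNat, by omega⟩ else 0

lemma sum_indicatorZ (n : ℕ) (x : Fin n → ℝ) (c : ℤ) :
    ∑ j : Fin n, (if (j.val : ℤ) = c then x j else 0) = extZ n x c := by
  by_cases h : 0 ≤ c ∧ c < n
  · have hc : c.toNat < n := by omega
    rw [extZ, dif_pos h]
    refine (Finset.sum_eq_single_of_mem ⟨c.toNat, hc⟩ (Finset.mem_univ _) ?_).trans ?_
    · intro j _ hj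
      rw [if_neg]
      intro hjc
      refine hj (Fin.ext ?_)
      show j.val = c.toNat
      omega
    · rw [if_pos (by simp; omega)]
  · rw [extZ, dif_neg h]
    apply Finset.sum_eq_zero
    intro j _
    rw [if_neg]
    intro hjc
    have := j.isLt
    omega

lemma pathGraph_mulVec (n : ℕ) (x : Fin n → ℝ) (i : Fin n) :
    ((SimpleGraph.pathGraph n).adjMatrix ℝ *ᵥ x) i
      = extZ n x ((i.val : ℤ) + 1) + extZ n x ((i.val : ℤ) - 1) := by
  rw [← sum_indicatorZ n x ((i.val:ℤ)+1), ← sum_indicatorZ n x ((i.val:ℤ)-1),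
    ← Finset.sum_add_distrib]
  simp only [Matrix.mulVec, dotProduct, SimpleGraph.adjMatrix_apply, ite_mul, one_mul,
    zero_mul]
  apply Finset.sum_congr rfl
  intro j _
  have hadj : (SimpleGraph.pathGraph n).Adj i j ↔
      ((j.val : ℤ) = i.val + 1 ∨ (j.val : ℤ) = i.val - 1) := by
    rw [SimpleGraph.pathGraph_adj]; omega
  by_cases h1 : (j.val:ℤ) = i.val + 1 <;> by_cases h2 : (j.val:ℤ) = i.val - 1 <;>
    simp [hadj, h1, h2] <;> omega

lemma extZ_coe (n : ℕ) (x : Fin n → ℝ) (k : ℕ) (h : k < n) :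
    extZ n x (k : ℤ) = x ⟨k, h⟩ := by
  rw [extZ, dif_pos ⟨Int.natCast_nonneg k, by exact_mod_cast h⟩]
  congr 1

lemma extZ_out (n : ℕ) (x : Fin n → ℝ) (c : ℤ) (h : ¬(0 ≤ c ∧ c < n)) :
    extZ n x c = 0 := dif_neg h

/-- The adjacency matrix over ℝ of the path graph `P_n` (for `n ≥ 1`) is invertible
if and only if `n` is even. -/
theorem pathGraph_adjMatrix_isUnit_iff_even (n : ℕ) (hn : 1 ≤ n) :
    IsUnit ((SimpleGraph.pathGraph n).adjMatrix ℝ) ↔ Even n := by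
  constructor
  · -- if n is odd, exhibit a kernel vector
    intro hU
    by_contra hoddn
    rw [Nat.not_even_iff] at hoddn
    set v : Fin n → ℝ := fun j => if j.val % 2 = 0 then (-1 : ℝ) ^ (j.val / 2) else 0 with hv
    have hvodd : ∀ c : ℤ, c % 2 = 1 → extZ n v c = 0 := by
      intro c hc
      by_cases h : 0 ≤ c ∧ c < n
      · rw [extZ, dif_pos h, hv]
        have : c.toNat % 2 = 1 := by omega
        simp [this]
      · exact extZ_out n v c h
    have hker : (SimpleGraph.pathGraph n).adjMatrix ℝ *ᵥ v = 0 := by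
      funext i
      rw [pathGraph_mulVec, Pi.zero_apply]
      rcases Nat.even_or_odd i.val with he | ho
      · rw [Nat.even_iff] at he
        rw [hvodd ((i.val : ℤ) + 1) (by omega), hvodd ((i.val : ℤ) - 1) (by omega), add_zero]
      · obtain ⟨m, hm⟩ := ho
        have hi := i.isLt
        have h1 : i.val + 1 < n := by omega
        have h2 : i.val - 1 < n := by omega
        have e1 : ((i.val : ℤ) + 1) = ((i.val + 1 : ℕ) : ℤ) := by push_cast; ring
        have e2 : ((i.val : ℤ) - 1) = ((i.val - 1 : ℕ) : ℤ) := by omega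
        rw [e1, e2, extZ_coe n v _ h1, extZ_coe n v _ h2, hv]
        have p1 : (i.val + 1) % 2 = 0 := by omega
        have p2 : (i.val - 1) % 2 = 0 := by omega
        have q1 : (i.val + 1) / 2 = m + 1 := by omega
        have q2 : (i.val - 1) / 2 = m := by omega
        simp [p1, p2, q1, q2, pow_succ]
    have hinj := Matrix.mulVec_injective_iff_isUnit.mpr hU
    have hv0 : v = 0 := hinj (by rw [hker, Matrix.mulVec_zero])
    have h0 : v ⟨0, hn⟩ = 1 := by simp [hv]
    rw [hv0] at h0
    simp at h0
  · -- if n is even, mulVec is injective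
    intro hev
    rw [← Matrix.mulVec_injective_iff_isUnit]
    have key : ∀ x : Fin n → ℝ, (SimpleGraph.pathGraph n).adjMatrix ℝ *ᵥ x = 0 → x = 0 := by
      intro x hx
      have hE : ∀ k, k < n → extZ n x ((k : ℤ) + 1) + extZ n x ((k : ℤ) - 1) = 0 := by
        intro k hk
        have := congrFun hx ⟨k, hk⟩
        rwa [pathGraph_mulVec] at this
      obtain ⟨m, hm⟩ := hev
      have hn2 : 2 ≤ n := by omega
      -- even-index entries
      have heven : ∀ k (h : 2 * k < n), x ⟨2 * k, h⟩ = (-1 : ℝ) ^ k * x ⟨0, hn⟩ := by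
        intro k
        induction k with
        | zero => intro h; simp
        | succ k ih =>
          intro h
          have h1 : 2 * k + 1 < n := by omega
          have h2 : 2 * k + 2 < n := by omega
          have h3 : 2 * k < n := by omega
          have hrec := hE (2 * k + 1) h1
          have e1 : ((2 * k + 1 : ℕ) : ℤ) + 1 = ((2 * k + 2 : ℕ) : ℤ) := by push_cast; ring
          have e2 : ((2 * k + 1 : ℕ) : ℤ) - 1 = ((2 * k : ℕ) : ℤ) := by push_cast; ring
          rw [e1, e2, extZ_coe n x _ h2, extZ_coe n x _ h3, ih h3] at hrec
          have hidx : (⟨2 * (k + 1), h⟩ : Fin n) = ⟨2 * k + 2, h2⟩ :=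
            Fin.ext (by show 2 * (k + 1) = 2 * k + 2; ring)
          rw [hidx, pow_succ]
          linarith
      -- x 0 = 0
      have hx0 : x ⟨0, hn⟩ = 0 := by
        have h1 : n - 1 < n := by omega
        have hrec := hE (n - 1) h1
        have e1 : ¬(0 ≤ ((n - 1 : ℕ) : ℤ) + 1 ∧ ((n - 1 : ℕ) : ℤ) + 1 < n) := by omega
        have h2 : n - 2 < n := by omega
        have e2 : ((n - 1 : ℕ) : ℤ) - 1 = ((n - 2 : ℕ) : ℤ) := by omega
        rw [extZ_out n x _ e1, e2, extZ_coe n x _ h2, zero_add] at hrec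
        have h3 : 2 * ((n - 2) / 2) < n := by omega
        have h4 := heven ((n - 2) / 2) h3
        have hidx : (⟨2 * ((n - 2) / 2), h3⟩ : Fin n) = ⟨n - 2, h2⟩ :=
          Fin.ext (by show 2 * ((n - 2) / 2) = n - 2; omega)
        rw [hidx, hrec] at h4
        have hne : ((-1 : ℝ) ^ ((n - 2) / 2)) ≠ 0 := by
          apply pow_ne_zero; norm_num
        exact ((mul_eq_zero.mp h4.symm).resolve_left hne)
      -- odd-index entries
      have hodd : ∀ k (h : 2 * k + 1 < n), x ⟨2 * k + 1, h⟩ = 0 := by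
        intro k
        induction k with
        | zero =>
          intro h
          have hrec := hE 0 (by omega)
          have e1 : ((0 : ℕ) : ℤ) + 1 = ((1 : ℕ) : ℤ) := by norm_num
          have e2 : ¬(0 ≤ ((0 : ℕ) : ℤ) - 1 ∧ ((0 : ℕ) : ℤ) - 1 < n) := by norm_num
          rw [e1, extZ_coe n x 1 (by omega), extZ_out n x _ e2, add_zero] at hrec
          have hidx : (⟨2 * 0 + 1, h⟩ : Fin n) = ⟨1, by omega⟩ :=
            Fin.ext (by show 2 * 0 + 1 = 1; ring)
          rw [hidx]; exact hrec
        | succ k ih =>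
          intro h
          have h1 : 2 * k + 2 < n := by omega
          have h2 : 2 * k + 3 < n := by omega
          have h3 : 2 * k + 1 < n := by omega
          have hrec := hE (2 * k + 2) h1
          have e1 : ((2 * k + 2 : ℕ) : ℤ) + 1 = ((2 * k + 3 : ℕ) : ℤ) := by push_cast; ring
          have e2 : ((2 * k + 2 : ℕ) : ℤ) - 1 = ((2 * k + 1 : ℕ) : ℤ) := by push_cast; ring
          rw [e1, e2, extZ_coe n x _ h2, extZ_coe n x _ h3, ih h3, add_zero] at hrec
          have hidx : (⟨2 * (k + 1) + 1, h⟩ : Fin n) = ⟨2 * k + 3, h2⟩ :=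
            Fin.ext (by show 2 * (k + 1) + 1 = 2 * k + 3; ring)
          rw [hidx]; exact hrec
      funext j
      rcases Nat.even_or_odd j.val with ⟨c, hc⟩ | ⟨c, hc⟩
      · have h : 2 * c < n := by have := j.isLt; omega
        have hj : j = ⟨2 * c, h⟩ := Fin.ext (by show j.val = 2 * c; omega)
        rw [hj, heven c h, hx0, mul_zero]; rfl
      · have h : 2 * c + 1 < n := by have := j.isLt; omega
        have hj : j = ⟨2 * c + 1, h⟩ := Fin.ext (by show j.val = 2 * c + 1; omega)
        rw [hj, hodd c h]; rfl
    intro a b hab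
    have : a - b = 0 := key (a - b) (by rw [Matrix.mulVec_sub, hab, sub_self])
    exact sub_eq_zero.mp this
end

section
/- Let n be an odd natural number with n ≥ 3. Then every connected finite simple graph G on n vertices whose adjacency matrix over ℝ is invertible has at least n edges, and there exists a connected simple graph on n vertices with exactly n edges whose adjacency matrix over ℝ is invertible (the cycle C_n, since n is odd). -/
/-!
A tree is bipartite, and on an odd number of vertices one colour class `s` of a bipartite graph
is an independent set with more than half of the vertices. A permutation `σ` contributing to the
Leibniz expansion of `det A` has `σ i` adjacent to `i` for every `i`, so it would map `s`
injectively into its complement; hence `det A = 0`. A connected graph with invertible adjacency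
matrix is therefore not a tree, so it has at least `n` edges.

The cycle `C_n` has `n` edges, and its adjacency matrix is `P + P⁻¹ = P⁻¹ (1 + P²)` for the cyclic
shift `P`. For odd `n`, `(P²)ⁿ = 1` gives `(1 + P²) · ∑_{i<n} (-P²)ⁱ = 1 - (-P²)ⁿ = 2`, so
`1 + P²` is invertible over `ℝ`.
-/

open Finset Matrix Equiv SimpleGraph

theorem isUnit_one_add_of_pow_eq_one {R : Type*} [Ring R] (h2 : IsUnit (2 : R)) {u : R} {n : ℕ}
    (hn : Odd n) (hu : u ^ n = 1) : IsUnit (1 + u) := by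
  set S := ∑ i ∈ range n, (-u) ^ i
  have hcomm : Commute (1 + u) S := Commute.sum_right _ _ _ fun i _ ↦
    ((Commute.one_left u).add_left (Commute.refl u)).neg_right.pow_right i
  have hS : (1 + u) * S = 2 := by
    rw [← sub_neg_eq_add, mul_neg_geom_sum, hn.neg_pow, hu]
    norm_num
  exact (hcomm.isUnit_mul_iff.1 (hS ▸ h2)).1

theorem Units.isUnit_add_inv_of_pow_eq_one {R : Type*} [Ring R] (h2 : IsUnit (2 : R)) {u : Rˣ}
    {n : ℕ} (hn : Odd n) (hu : u ^ n = 1) : IsUnit ((u : R) + ↑u⁻¹) := by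
  have hsq : ((u : R) * u) ^ n = 1 := by
    rw [← Units.val_mul, ← Units.val_pow_eq_pow_val, ← pow_two, ← pow_mul, mul_comm, pow_mul, hu,
      one_pow, Units.val_one]
  have hfactor : (u : R) + ↑u⁻¹ = ↑u⁻¹ * (1 + u * u) := by
    rw [mul_add, mul_one, ← mul_assoc, Units.inv_mul, one_mul, add_comm]
  rw [hfactor]
  exact u⁻¹.isUnit.mul (isUnit_one_add_of_pow_eq_one h2 hn hsq)

theorem Matrix.isUnit_permMatrix_add_permMatrix_inv {ι R : Type*} [Fintype ι] [DecidableEq ι]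
    [CommRing R] (h2 : IsUnit (2 : R)) {σ : Perm ι} {n : ℕ} (hn : Odd n) (hσ : σ ^ n = 1) :
    IsUnit (σ.permMatrix R + σ⁻¹.permMatrix R) := by
  let u := (permMatrixHom (n := ι) (R := R)).toHomUnits σ⁻¹
  have hu : u ^ n = 1 := by rw [← map_pow, inv_pow, hσ, inv_one, map_one]
  have h2' : IsUnit (2 : Matrix ι ι R) := by
    rw [← map_ofNat (algebraMap R (Matrix ι ι R)) 2]
    exact h2.map _
  have hval : (u : Matrix ι ι R) = σ.permMatrix R := by
    simp only [u, MonoidHom.coe_toHomUnits, permMatrixHom_apply, inv_inv]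
  have hval' : (↑u⁻¹ : Matrix ι ι R) = σ⁻¹.permMatrix R := by
    simp only [u, ← map_inv, MonoidHom.coe_toHomUnits, inv_inv, permMatrixHom_apply]
  simpa only [hval, hval'] using u.isUnit_add_inv_of_pow_eq_one h2' hn hu

namespace SimpleGraph

variable {V : Type*} {G : SimpleGraph V}

theorem Connected.card_le_card_edgeSet_of_not_isAcyclic [Finite V] (hG : G.Connected)
    (hcyc : ¬G.IsAcyclic) : Nat.card V ≤ Nat.card G.edgeSet := by
  have hne : Nat.card G.edgeSet + 1 ≠ Nat.card V := fun h ↦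
    hcyc (isTree_iff_connected_and_card.2 ⟨hG, h⟩).isAcyclic
  have := hG.card_vert_le_card_edgeSet_add_one
  omega

variable [DecidableEq V] [DecidableRel G.Adj] {R : Type*}

theorem adjMatrix_eq_permMatrix_add_permMatrix_inv [AddMonoidWithOne R] (σ : Perm V)
    (hadj : ∀ i j, G.Adj i j ↔ σ i = j ∨ σ j = i) (hσ : ∀ i, σ (σ i) ≠ i) :
    G.adjMatrix R = σ.permMatrix R + σ⁻¹.permMatrix R := by
  ext i j
  by_cases h1 : σ i = j <;> by_cases h2 : σ j = i
  · exact absurd (h1 ▸ h2) (hσ i)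
  all_goals simp [adjMatrix_apply, hadj, h1, h2, eq_comm (a := i), Equiv.symm_apply_eq,
    PEquiv.toMatrix_apply]

variable [Fintype V] [CommRing R]

theorem det_adjMatrix_eq_zero_of_isIndepSet {s : Finset V} (hs : G.IsIndepSet s)
    (hcard : #sᶜ < #s) : (G.adjMatrix R).det = 0 := by
  rw [det_apply]
  refine sum_eq_zero fun σ _ ↦ ?_
  by_cases hσ : ∀ i, G.Adj (σ i) i
  · have : #s ≤ #sᶜ := card_le_card_of_injOn σ
      (fun i hi ↦ mem_compl.2 fun hσi ↦ hs hσi hi (hσ i).ne (hσ i)) σ.injective.injOn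
    omega
  · push Not at hσ
    obtain ⟨i, hi⟩ := hσ
    rw [prod_eq_zero (mem_univ i) (by simp [hi]), smul_zero]

theorem IsBipartite.det_adjMatrix_eq_zero (hG : G.IsBipartite) (hodd : Odd (Fintype.card V)) :
    (G.adjMatrix R).det = 0 := by
  obtain ⟨C⟩ := hG
  set s : Finset V := {v | C v = 0}
  have hindep : G.IsIndepSet s := by
    convert C.isIndepSet_colorClass 0
    ext v; simp [s, Coloring.colorClass]
  have hindep' : G.IsIndepSet ↑sᶜ := by
    convert C.isIndepSet_colorClass 1
    ext v; simp [s, Coloring.colorClass]; omega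
  have hsum : #s + #sᶜ = Fintype.card V := card_add_card_compl s
  have hne : #s ≠ #sᶜ := fun h ↦ Nat.not_even_iff_odd.2 hodd ⟨#s, by rw [← hsum, h]⟩
  rcases hne.lt_or_gt with h | h
  · exact det_adjMatrix_eq_zero_of_isIndepSet hindep' (by rwa [compl_compl])
  · exact det_adjMatrix_eq_zero_of_isIndepSet hindep h

theorem isUnit_adjMatrix_circulantGraph_singleton {Γ : Type*} [AddGroup Γ] [Fintype Γ]
    [DecidableEq Γ] {a : Γ} [DecidableRel (circulantGraph {a}).Adj] (h2 : IsUnit (2 : R))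
    (ha : a ≠ 0) (hodd : Odd (addOrderOf a)) : IsUnit ((circulantGraph {a}).adjMatrix R) := by
  have h2a : a + a ≠ 0 := fun h ↦ ha <| AddMonoid.addOrderOf_eq_one_iff.1 <|
    Nat.Coprime.eq_one_of_dvd hodd.coprime_two_right
      (addOrderOf_dvd_of_nsmul_eq_zero (by rwa [two_nsmul]))
  rw [adjMatrix_eq_permMatrix_add_permMatrix_inv (Equiv.addLeft a)]
  · exact isUnit_permMatrix_add_permMatrix_inv h2 hodd
      (by rw [nsmul_addLeft, addOrderOf_nsmul_eq_zero, addLeft_zero])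
  · intro i j
    simp only [circulantGraph_adj, Set.mem_singleton_iff, sub_eq_iff_eq_add, Equiv.coe_addLeft]
    have hne : ∀ x : Γ, a + x ≠ x := fun x ↦ by simpa using ha
    constructor
    · rintro ⟨-, h | h⟩
      exacts [Or.inr h.symm, Or.inl h.symm]
    · rintro (rfl | rfl)
      exacts [⟨(hne i).symm, Or.inr rfl⟩, ⟨hne j, Or.inl rfl⟩]
  · intro i h
    simp only [Equiv.coe_addLeft, ← add_assoc, add_eq_right] at h
    exact h2a h

theorem card_edgeFinset_cycleGraph (m : ℕ) : #(cycleGraph (m + 3)).edgeFinset = m + 3 := by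
  have := sum_degrees_eq_twice_card_edges (cycleGraph (m + 3))
  simp only [cycleGraph_degree_three_le, sum_const, card_univ, Fintype.card_fin,
    smul_eq_mul] at this
  omega

theorem isUnit_adjMatrix_cycleGraph {m : ℕ} (hodd : Odd (m + 3))
    [DecidableRel (cycleGraph (m + 3)).Adj] (h2 : IsUnit (2 : R)) :
    IsUnit ((cycleGraph (m + 3)).adjMatrix R) := by
  -- `ZMod (m + 3)` is `Fin (m + 3)` by definition.
  have horder : addOrderOf (1 : Fin (m + 3)) = m + 3 := ZMod.addOrderOf_one (m + 3)
  convert isUnit_adjMatrix_circulantGraph_singleton h2 one_ne_zero (horder ▸ hodd)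
  exact cycleGraph_eq_circulantGraph (m + 2)

end SimpleGraph

attribute [local instance] Classical.propDecidable

/-- For odd `n ≥ 3`: every connected simple graph on `n` vertices with invertible (real)
adjacency matrix has at least `n` edges, and some connected simple graph on `n` vertices
with exactly `n` edges has invertible adjacency matrix. -/
theorem min_edges_connected_nonsingular_odd (n : ℕ) (hn : 3 ≤ n) (hodd : Odd n) :
    (∀ G : SimpleGraph (Fin n), G.Connected → IsUnit (G.adjMatrix ℝ) →
      n ≤ G.edgeFinset.card) ∧
    (∃ G : SimpleGraph (Fin n), G.Connected ∧ G.edgeFinset.card = n ∧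
      IsUnit (G.adjMatrix ℝ)) := by
  refine ⟨fun G hG hunit ↦ ?_, ?_⟩
  · by_cases hcyc : G.IsAcyclic
    · have hdet := IsTree.isBipartite ⟨hG, hcyc⟩ |>.det_adjMatrix_eq_zero (R := ℝ)
        (by rwa [Fintype.card_fin])
      exact absurd ((isUnit_iff_isUnit_det _).1 hunit) (by simp [hdet])
    · have := hG.card_le_card_edgeSet_of_not_isAcyclic hcyc
      rwa [Nat.card_eq_fintype_card, Fintype.card_fin, Nat.card_eq_fintype_card,
        ← edgeFinset_card] at this
  · obtain ⟨m, rfl⟩ := Nat.exists_eq_add_of_le' hn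
    refine ⟨cycleGraph (m + 3), cycleGraph_connected, ?_, ?_⟩
    · convert card_edgeFinset_cycleGraph m
    · convert isUnit_adjMatrix_cycleGraph (R := ℝ) hodd two_ne_zero.isUnit <;> rfl
end

section
/- Let G be a finite simple graph on n vertices containing a vertex v incident with exactly one edge, with unique neighbor u, and let H be the induced subgraph obtained by deleting both v and u (and all edges incident with them). Then the nullity of G equals the nullity of H; equivalently, n − r(G) = (n−2) − r(H), where r denotes the rank over ℝ of the adjacency matrix. -/
attribute [local instance] Classical.propDecidable

/-!
Row `v` of `A(G)` is the unit vector `e_u`, and by symmetry so is column `v`. Hence a kernel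
vector `x` of `A(G)` has `x u = 0`, its restriction to `{v, u}ᶜ` is a kernel vector of `A(H)`,
and the `u`-th equation determines `x v` from that restriction. So restriction is an isomorphism
of kernels, and rank–nullity gives `r(G) = r(H) + 2`.
-/

open Module

namespace Matrix

theorem rank_add_finrank_ker_mulVecLin {m n K : Type*} [Fintype n] [Field K] (A : Matrix m n K) :
    A.rank + finrank K (LinearMap.ker A.mulVecLin) = Fintype.card n := by
  rw [rank, LinearMap.finrank_range_add_finrank_ker, finrank_pi]

section ComplPair

variable {V : Type*} [Fintype V] {v u : V} {s : Set V} [Fintype s]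

theorem mulVec_apply_eq_add_add_sum_of_compl_eq_pair {R : Type*} [NonUnitalNonAssocSemiring R]
    (hvu : v ≠ u) (hs : sᶜ = {v, u}) (A : Matrix V V R) (x : V → R) (w : V) :
    (A *ᵥ x) w = A w v * x v + A w u * x u + ∑ y : s, A w y * x y := by
  rw [mulVec, dotProduct, ← Finset.sum_add_sum_compl {v, u}, Finset.sum_pair hvu]
  congr 1
  refine Finset.sum_subtype _ (fun y => ?_) _
  rw [Finset.mem_compl, ← not_iff_not, not_not, ← Set.mem_compl_iff, hs]
  simp

variable [DecidableEq V]

section CommRing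

variable {R : Type*} [CommRing R] {A : Matrix V V R}

theorem mulVec_eq_zero_iff_of_row_eq_single (hA : A.IsSymm) (hrow : A v = Pi.single u 1)
    (hvu : v ≠ u) (hs : sᶜ = {v, u}) (x : V → R) :
    A *ᵥ x = 0 ↔ x u = 0 ∧ A.submatrix ((↑) : s → V) ((↑) : s → V) *ᵥ (fun y : s => x y) = 0 ∧
      x v + ∑ y : s, A u y * x y = 0 := by
  have hus : u ∉ s := by rw [← Set.mem_compl_iff, hs]; simp
  have hcol (w : V) : A w v = (Pi.single u 1 : V → R) w := by rw [hA.apply, hrow]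
  have hv : (A *ᵥ x) v = x u := by rw [mulVec, hrow, single_one_dotProduct]
  have hu : (A *ᵥ x) u = x v + A u u * x u + ∑ y : s, A u y * x y := by
    rw [mulVec_apply_eq_add_add_sum_of_compl_eq_pair hvu hs, hcol, Pi.single_eq_same, one_mul]
  have hrest (w : s) : (A *ᵥ x) w =
      A w u * x u + (A.submatrix ((↑) : s → V) ((↑) : s → V) *ᵥ (fun y : s => x y)) w := by
    rw [mulVec_apply_eq_add_add_sum_of_compl_eq_pair hvu hs, hcol,
      Pi.single_eq_of_ne fun h : (w : V) = u => hus (h ▸ w.2), zero_mul, zero_add]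
    rfl
  constructor
  · intro hx
    have hxu : x u = 0 := by rw [← hv, hx, Pi.zero_apply]
    refine ⟨hxu, funext fun w => ?_, ?_⟩
    · simpa [hxu] using (hrest w).symm.trans (congrFun hx w)
    · simpa [hxu] using hu.symm.trans (congrFun hx u)
  · rintro ⟨hxu, hB, hxv⟩
    funext w
    by_cases hw : w ∈ s
    · simpa [hxu, hB] using hrest ⟨w, hw⟩
    · obtain rfl | rfl : w ∈ ({v, u} : Set V) := hs ▸ hw
      · exact hv.trans hxu
      · simpa [hxu, hxv] using hu

theorem finrank_ker_mulVecLin_submatrix_of_row_eq_single (hA : A.IsSymm)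
    (hrow : A v = Pi.single u 1) (hvu : v ≠ u) (hs : sᶜ = {v, u}) :
    finrank R (LinearMap.ker (A.submatrix ((↑) : s → V) ((↑) : s → V)).mulVecLin) =
      finrank R (LinearMap.ker A.mulVecLin) := by
  have hker (x : V → R) := mulVec_eq_zero_iff_of_row_eq_single hA hrow hvu hs x
  let restrict : LinearMap.ker A.mulVecLin →ₗ[R]
      LinearMap.ker (A.submatrix ((↑) : s → V) ((↑) : s → V)).mulVecLin :=
    (LinearMap.funLeft R R ((↑) : s → V)).restrict fun x hx => ((hker x).mp hx).2.1
  have hinj : Function.Injective restrict := by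
    rw [injective_iff_map_eq_zero]
    rintro ⟨x, hx⟩ h0
    have hxs (y : s) : x y = 0 := congrFun (congrArg Subtype.val h0) y
    obtain ⟨hxu, -, hxv⟩ := (hker x).mp hx
    simp only [hxs, mul_zero, Finset.sum_const_zero, add_zero] at hxv
    ext w
    by_cases hw : w ∈ s
    · exact hxs ⟨w, hw⟩
    · obtain rfl | rfl : w ∈ ({v, u} : Set V) := hs ▸ hw
      exacts [hxv, hxu]
  have hsurj : Function.Surjective restrict := by
    rintro ⟨z, hz⟩
    let x : V → R := fun w =>
      if h : w ∈ s then z ⟨w, h⟩ else if w = v then -∑ y : s, A u y * z y else 0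
    have hxs : (fun y : s => x y) = z := funext fun y => dif_pos y.2
    have hvs : v ∉ s := by rw [← Set.mem_compl_iff, hs]; simp
    have hus : u ∉ s := by rw [← Set.mem_compl_iff, hs]; simp
    have hx : A *ᵥ x = 0 := by
      refine (hker x).mpr ⟨?_, hxs ▸ hz, ?_⟩
      · simp [x, hus, hvu.symm]
      · simp [x, hvs]
    exact ⟨⟨x, hx⟩, Subtype.ext hxs⟩
  exact (LinearEquiv.ofBijective restrict ⟨hinj, hsurj⟩).finrank_eq.symm

end CommRing

theorem rank_eq_rank_submatrix_add_two_of_row_eq_single {K : Type*} [Field K] {A : Matrix V V K}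
    (hA : A.IsSymm) (hrow : A v = Pi.single u 1) (hvu : v ≠ u) (hs : sᶜ = {v, u}) :
    A.rank = (A.submatrix ((↑) : s → V) ((↑) : s → V)).rank + 2 := by
  have hcard : Fintype.card s + 2 = Fintype.card V := by
    rw [← Set.ncard_pair hvu, ← hs, Fintype.card_eq_nat_card, Nat.card_coe_set_eq,
      Set.ncard_add_ncard_compl, Nat.card_eq_fintype_card]
  have hnullA := rank_add_finrank_ker_mulVecLin A
  have hnullB := rank_add_finrank_ker_mulVecLin (A.submatrix ((↑) : s → V) ((↑) : s → V))
  rw [finrank_ker_mulVecLin_submatrix_of_row_eq_single hA hrow hvu hs] at hnullB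
  -- `Fintype.card s` and `Fintype.card {x // x ∈ s}` are distinct atoms for `omega`
  rw [← hnullB] at hcard
  omega

end ComplPair

end Matrix

namespace SimpleGraph

variable {V : Type*} (G : SimpleGraph V)

theorem adjMatrix_apply_eq_single_of_degree_eq_one {α : Type*} [Zero α] [One α] [DecidableEq V]
    [DecidableRel G.Adj] {v u : V} [Fintype (G.neighborSet v)] (hdeg : G.degree v = 1)
    (hadj : G.Adj v u) : G.adjMatrix α v = Pi.single u 1 := by
  obtain ⟨w, -, huniq⟩ := degree_eq_one_iff_existsUnique_adj.mp hdeg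
  funext x
  by_cases hx : x = u
  · simp [hx, hadj]
  · rw [adjMatrix_apply, Pi.single_eq_of_ne hx,
      if_neg fun h => hx ((huniq x h).trans (huniq u hadj).symm)]

theorem adjMatrix_induce {α : Type*} [Zero α] [One α] [DecidableRel G.Adj] (s : Set V)
    [DecidableRel (G.induce s).Adj] :
    (G.induce s).adjMatrix α = (G.adjMatrix α).submatrix ((↑) : s → V) ((↑) : s → V) :=
  ((Embedding.induce s).submatrix_adjMatrix α).symm

end SimpleGraph

/-- If `v` is a vertex of degree one with (unique) neighbor `u`, then deleting both `v` and
`u` preserves the nullity of the adjacency matrix: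
`n - r(G) = (n - 2) - r(H)` where `H = G - {v, u}`. -/
theorem nullity_delete_pendant {V : Type*} [Fintype V] (G : SimpleGraph V) (v u : V)
    (hdeg : G.degree v = 1) (hadj : G.Adj v u) :
    Fintype.card V - (G.adjMatrix ℝ).rank =
      (Fintype.card V - 2) - ((G.induce {v, u}ᶜ).adjMatrix ℝ).rank := by
  have hrank := (G.adjMatrix ℝ).rank_eq_rank_submatrix_add_two_of_row_eq_single
    G.isSymm_adjMatrix (G.adjMatrix_apply_eq_single_of_degree_eq_one hdeg hadj) hadj.ne
    (compl_compl _)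
  rw [G.adjMatrix_induce, hrank]
  omega
end

section
/- Let T be a finite tree (a connected acyclic simple graph). Then the rank over ℝ of the adjacency matrix of T equals twice the matching number of T, i.e., r(T) = 2·β(T). -/
attribute [local instance] Classical.propDecidable

/-!
A forest with an edge has a leaf `a`; let `b` be its neighbour. Deleting the edges at `b` lowers
the matching number by exactly one: at most one matching edge contains `b`, and any matching of
the smaller graph extends by `ab`. It also lowers the rank of the adjacency matrix by exactly two:
listing `a, b` first, the adjacency matrix has the invertible top-left block `!![0, 1; 1, 0]`, and
since the row and column of `a` vanish outside `b`, the Schur complement of that block is the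
adjacency matrix of the rest of the graph. Induction on the edge set gives `rank = 2 * β` for
every finite forest, over any field.
-/

open Finset Matrix

namespace Submodule

variable {R M N : Type*} [Field R] [AddCommGroup M] [AddCommGroup N] [Module R M] [Module R N]

theorem finrank_prod (p : Submodule R M) (q : Submodule R N) [FiniteDimensional R p]
    [FiniteDimensional R q] :
    Module.finrank R (p.prod q) = Module.finrank R p + Module.finrank R q := by
  let e : p.prod q ≃ₗ[R] p × q :=
    { toFun := fun x => (⟨x.1.1, x.2.1⟩, ⟨x.1.2, x.2.2⟩)
      invFun := fun y => ⟨(y.1, y.2), y.1.2, y.2.2⟩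
      map_add' := fun _ _ => rfl
      map_smul' := fun _ _ => rfl }
  rw [e.finrank_eq, Module.finrank_prod]

end Submodule

namespace Matrix

variable {K : Type*} [Field K] {l m n o : Type*} [Fintype m]

theorem rank_fromBlocks_zero_zero [Fintype o] (A : Matrix l m K) (D : Matrix n o K) :
    (fromBlocks A 0 0 D).rank = A.rank + D.rank := by
  let eₗ := LinearEquiv.sumArrowLequivProdArrow l n K K
  let eᵣ := LinearEquiv.sumArrowLequivProdArrow m o K K
  have h : (fromBlocks A 0 0 D).mulVecLin =
      eₗ.symm.toLinearMap ∘ₗ (A.mulVecLin.prodMap D.mulVecLin) ∘ₗ eᵣ.toLinearMap := by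
    refine LinearMap.ext fun x => funext fun i => ?_
    cases i <;> simp [eₗ, eᵣ, fromBlocks_mulVec, LinearEquiv.sumArrowLequivProdArrow,
      Equiv.sumArrowEquivProdArrow]
  rw [rank, h, LinearMap.range_comp, LinearMap.range_comp_of_range_eq_top _ eᵣ.range,
    LinearEquiv.finrank_map_eq, LinearMap.range_prodMap, Submodule.finrank_prod, rank, rank]

theorem rank_fromBlocks_of_invertible₁₁ [Fintype l] [Fintype n] [DecidableEq l] [DecidableEq m]
    [DecidableEq n] (A : Matrix m m K) (B : Matrix m n K) (C : Matrix l m K) (D : Matrix l n K)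
    [Invertible A] : (fromBlocks A B C D).rank = A.rank + (D - C * ⅟A * B).rank := by
  rw [fromBlocks_eq_of_invertible₁₁, rank_mul_eq_left_of_isUnit_det,
    rank_mul_eq_right_of_isUnit_det, rank_fromBlocks_zero_zero]
  · rw [det_fromBlocks_zero₁₂]; simp
  · rw [det_fromBlocks_zero₂₁]; simp

end Matrix

noncomputable def Equiv.boolSumSubtypeNeNe {V : Type*} {a b : V} (hab : a ≠ b) :
    Bool ⊕ {x // x ≠ a ∧ x ≠ b} ≃ V :=
  Equiv.ofBijective (Sum.elim (fun t => cond t a b) Subtype.val) ⟨by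
      refine Function.Injective.sumElim ?_ Subtype.val_injective ?_
      · rintro (_ | _) (_ | _) h <;> simp_all [hab.symm]
      · rintro (_ | _) ⟨x, hxa, hxb⟩ h
        exacts [hxb h.symm, hxa h.symm],
    fun x => by
      by_cases hxa : x = a
      · exact ⟨.inl true, hxa.symm⟩
      by_cases hxb : x = b
      · exact ⟨.inl false, hxb.symm⟩
      exact ⟨.inr ⟨x, hxa, hxb⟩, rfl⟩⟩

namespace SimpleGraph

variable {V : Type*} {G : SimpleGraph V}

def matchingSizes (G : SimpleGraph V) : Set ℕ :=
  {k | ∃ M : Finset (Sym2 V), ↑M ⊆ G.edgeSet ∧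
    (M : Set (Sym2 V)).Pairwise (fun e f => ∀ w : V, ¬(w ∈ e ∧ w ∈ f)) ∧ M.card = k}

noncomputable def matchingNumber (G : SimpleGraph V) : ℕ := sSup G.matchingSizes

theorem isGreatest_matchingNumber [Fintype V] : IsGreatest G.matchingSizes G.matchingNumber := by
  have hbdd : BddAbove G.matchingSizes := ⟨Fintype.card (Sym2 V), by
    rintro _ ⟨M, -, -, rfl⟩
    exact card_le_univ M⟩
  exact ⟨Nat.sSup_mem ⟨0, ∅, by simp, by simp, rfl⟩ hbdd, fun _ hk => le_csSup hbdd hk⟩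

theorem matchingNumber_bot : (⊥ : SimpleGraph V).matchingNumber = 0 := by
  refine IsGreatest.csSup_eq ⟨⟨∅, by simp, by simp, rfl⟩, ?_⟩
  rintro _ ⟨M, hM, -, rfl⟩
  simpa using hM

theorem succ_mem_upperBounds_matchingSizes {b : V} {m : ℕ}
    (hm : m ∈ upperBounds (G.deleteIncidenceSet b).matchingSizes) :
    m + 1 ∈ upperBounds G.matchingSizes := by
  rintro _ ⟨M, hMG, hM, rfl⟩
  have h_at : #(M.filter (b ∈ ·)) ≤ 1 := card_le_one.2 fun e he f hf => by
    rw [mem_filter] at he hf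
    by_contra hef
    exact hM he.1 hf.1 hef b ⟨he.2, hf.2⟩
  have h_away : #(M.filter (b ∉ ·)) ≤ m := by
    refine hm ⟨_, fun e he => ?_, hM.mono (coe_subset.2 (filter_subset _ _)), rfl⟩
    rw [coe_filter] at he
    rw [edgeSet_deleteIncidenceSet]
    exact ⟨hMG he.1, fun h => he.2 h.2⟩
  rw [← card_filter_add_card_filter_not (b ∈ ·)]
  omega

theorem succ_mem_matchingSizes {a b : V} (hab : G.Adj a b) (hleaf : ∀ w, G.Adj a w → w = b)
    {m : ℕ} (hm : m ∈ (G.deleteIncidenceSet b).matchingSizes) : m + 1 ∈ G.matchingSizes := by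
  obtain ⟨M, hMG, hM, rfl⟩ := hm
  have h_away : ∀ e ∈ M, a ∉ e ∧ b ∉ e := by
    intro e he
    obtain ⟨heG, heb⟩ := (G.edgeSet_deleteIncidenceSet b) ▸ hMG he
    refine ⟨fun hae => ?_, fun hbe => heb ⟨heG, hbe⟩⟩
    obtain ⟨w, rfl⟩ := Sym2.mem_iff_exists.1 hae
    exact heb ⟨heG, hleaf w heG ▸ Sym2.mem_mk_right a w⟩
  have hab_notMem : s(a, b) ∉ M := fun h => (h_away _ h).2 (Sym2.mem_mk_right a b)
  refine ⟨insert s(a, b) M, ?_, ?_, card_insert_of_notMem hab_notMem⟩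
  · rw [coe_insert, Set.insert_subset_iff]
    exact ⟨hab, hMG.trans (edgeSet_mono (deleteIncidenceSet_le G b))⟩
  · have h_disj : ∀ f ∈ M, ∀ w, ¬(w ∈ s(a, b) ∧ w ∈ f) := by
      rintro f hf w ⟨hw, hwf⟩
      rcases Sym2.mem_iff.1 hw with rfl | rfl
      exacts [(h_away f hf).1 hwf, (h_away f hf).2 hwf]
    rw [coe_insert, Set.pairwise_insert]
    exact ⟨hM, fun f hf _ => ⟨h_disj f hf, fun w hw => h_disj f hf w hw.symm⟩⟩

theorem matchingNumber_eq_of_leaf [Fintype V] {a b : V} (hab : G.Adj a b)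
    (hleaf : ∀ w, G.Adj a w → w = b) :
    G.matchingNumber = (G.deleteIncidenceSet b).matchingNumber + 1 :=
  IsGreatest.csSup_eq ⟨succ_mem_matchingSizes hab hleaf isGreatest_matchingNumber.1,
    succ_mem_upperBounds_matchingSizes isGreatest_matchingNumber.2⟩

theorem IsAcyclic.exists_existsUnique_adj [Finite V] (hG : G.IsAcyclic) (hne : G ≠ ⊥) :
    ∃ a, ∃! b, G.Adj a b := by
  obtain ⟨x, y, hxy⟩ : ∃ x y, G.Adj x y := by
    simpa [ne_eq, eq_bot_iff_forall_not_adj] using hne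
  have : Nonempty V := ⟨x⟩
  obtain ⟨u, v, p, hp, hmax⟩ := Walk.exists_isPath_forall_isPath_length_le_length G
  have hnil : ¬p.Nil := fun hnil => by
    simpa [hnil.length_eq_zero] using hmax _ _ hxy.toWalk (by simp [hxy.ne])
  refine ⟨u, p.snd, p.adj_snd hnil, fun w hw => hG.eq_snd_of_adj_start hp hw ?_⟩
  by_contra hws
  simpa using hmax _ _ (p.cons hw.symm) (hp.cons hws)

section Rank

variable {K : Type*} [Field K] [Fintype V] [DecidableEq V] [DecidableRel G.Adj]

theorem rank_adjMatrix_eq_of_leaf {a b : V} (hab : G.Adj a b) (hleaf : ∀ w, G.Adj a w → w = b) :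
    (G.adjMatrix K).rank = ((G.deleteIncidenceSet b).adjMatrix K).rank + 2 := by
  let W := {x : V // x ≠ a ∧ x ≠ b}
  let pt : Bool → V := fun t => cond t a b
  let ι : W → V := Subtype.val
  let e := Equiv.boolSumSubtypeNeNe hab.ne
  have he : ⇑e = Sum.elim pt ι := rfl
  let A := G.adjMatrix K
  let B := A.submatrix pt pt
  let C := A.submatrix pt ι
  let D := A.submatrix ι pt
  let A' := A.submatrix ι ι
  have hB : B * B = 1 := by
    ext i j
    cases i <;> cases j <;> simp [B, A, pt, mul_apply, hab, hab.symm]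
  let _ : Invertible B := invertibleOfLeftInverse B B hB
  have ha : ∀ x : W, ¬G.Adj a x := fun x h => x.2.2 (hleaf _ h)
  have ha' : ∀ x : W, ¬G.Adj x a := fun x h => ha x h.symm
  -- `⅟B = B` swaps `a` and `b`, so each term has a factor from the (zero) `a`-column of `D`
  -- or `a`-row of `C`.
  have hSchur : D * ⅟B * C = 0 := by
    ext x y
    simp [invOf_eq_right_inv hB, mul_apply, B, C, D, A, pt, ι, ha, ha']
  have hG : A.submatrix e e = fromBlocks B C D A' := by
    ext (_ | _) (_ | _) <;> rfl
  have hG' : ((G.deleteIncidenceSet b).adjMatrix K).submatrix e e = fromBlocks 0 0 0 A' := by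
    have hb : ∀ x : W, (x : V) ≠ b := fun x => x.2.2
    ext ((_ | _) | _) ((_ | _) | _) <;>
      simp [he, A', A, pt, ι, deleteIncidenceSet_adj, hb, ha, ha']
  rw [← rank_submatrix A e e, hG, rank_fromBlocks_of_invertible₁₁, hSchur, sub_zero,
    ← rank_submatrix _ e e, hG', rank_fromBlocks_zero_zero, rank_zero,
    rank_of_isUnit B (isUnit_of_invertible B), Fintype.card_bool]
  ring

theorem IsAcyclic.rank_adjMatrix_eq_two_mul_matchingNumber (hG : G.IsAcyclic) :
    (G.adjMatrix K).rank = 2 * G.matchingNumber := by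
  revert ‹DecidableRel G.Adj› hG
  induction G using WellFoundedLT.induction with
  | _ G ih =>
  intro _ hG
  by_cases hbot : G = ⊥
  · subst hbot
    have hA : (⊥ : SimpleGraph V).adjMatrix K = 0 := by ext; simp
    simp [hA, matchingNumber_bot]
  obtain ⟨a, b, hab, hleaf⟩ := hG.exists_existsUnique_adj hbot
  have hlt : G.deleteIncidenceSet b < G :=
    (deleteIncidenceSet_le G b).lt_of_not_ge fun hle => by
      simpa [deleteIncidenceSet_adj] using hle hab
  rw [rank_adjMatrix_eq_of_leaf hab hleaf, ih _ hlt (hG.anti (deleteIncidenceSet_le G b)),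
    matchingNumber_eq_of_leaf hab hleaf]
  ring

end Rank

end SimpleGraph

/-- For a finite tree `T`, the rank of the (real) adjacency matrix is twice the matching
number of `T` (the largest cardinality of a set of pairwise vertex-disjoint edges). -/
theorem rank_tree_eq_two_mul_matchingNumber {V : Type*} [Fintype V] (T : SimpleGraph V)
    (hT : T.IsTree) :
    (T.adjMatrix ℝ).rank =
      2 * sSup {k : ℕ | ∃ M : Finset (Sym2 V), ↑M ⊆ T.edgeSet ∧
        (∀ e ∈ M, ∀ f ∈ M, e ≠ f → ∀ w : V, ¬(w ∈ e ∧ w ∈ f)) ∧ M.card = k} :=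
  hT.isAcyclic.rank_adjMatrix_eq_two_mul_matchingNumber
end

section
/- Let T be a finite tree on n vertices. Then the adjacency matrix of T over ℝ is invertible (equivalently r(T) = n) if and only if T has a perfect matching, i.e., a matching M with n = 2|M|. -/
attribute [local instance] Classical.propDecidable

/-!
Expanding the determinant, `det A(G)` is the signed count of the permutations `σ` sending every
vertex to a neighbour. In an acyclic graph such a `σ` is an involution, because an orbit of
length at least three would trace a cycle; so `σ` is a fixed-point-free involution, i.e. a
perfect matching, and its sign is `(-1) ^ (n / 2)`. All terms of the expansion therefore have the
same sign, and `det A(G) ≠ 0` exactly when a perfect matching exists.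
-/

open Function Finset Equiv

namespace SimpleGraph

variable {V : Type*} {G : SimpleGraph V}

section Acyclic

theorem IsAcyclic.apply_apply_eq_self_of_mem_periodicPts (hG : G.IsAcyclic) {f : V → V}
    (hf : ∀ v, G.Adj v (f v)) {x : V} (hx : x ∈ periodicPts f) : f (f x) = x := by
  by_contra hffx
  set k := minimalPeriod f x
  have hk : 3 ≤ k := by
    have hpos : 0 < k := minimalPeriod_pos_of_mem_periodicPts hx
    have hper : f^[k] x = x := iterate_minimalPeriod
    by_contra! hlt
    interval_cases k
    · exact (hf x).ne hper.symm
    · exact hffx hper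
  have : NeZero k := ⟨by omega⟩
  have hsucc {i j : Fin k} (hij : (i - j).val = 1) : f^[i] x = f (f^[j] x) := by
    have : i = j + 1 := by
      rw [← sub_eq_iff_eq_add']
      exact Fin.ext (by rw [hij, Fin.val_one', Nat.mod_eq_of_lt (by omega)])
    rw [this, Fin.val_add, Fin.val_one', Nat.add_mod_mod, iterate_mod_minimalPeriod_eq,
      iterate_succ_apply']
  let orbit : cycleGraph k →g G :=
    { toFun i := f^[i] x
      map_rel' hij := by
        rcases cycleGraph_adj'.1 hij with h | h
        · simpa only [hsucc h] using (hf _).symm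
        · simpa only [hsucc h] using hf _ }
  have horbit : Injective orbit := fun i j hij =>
    Fin.ext (iterate_injOn_Iio_minimalPeriod i.isLt j.isLt hij)
  exact isAcyclic_iff_free_cycleGraph.1 hG k hk ⟨orbit.toCopy horbit⟩

theorem IsAcyclic.involutive_of_forall_adj [Finite V] (hG : G.IsAcyclic) {σ : Perm V}
    (hσ : ∀ v, G.Adj v (σ v)) : Involutive σ := fun x =>
  hG.apply_apply_eq_self_of_mem_periodicPts hσ (σ.injective.mem_periodicPts x)

theorem IsAcyclic.sign_eq_of_forall_adj [Fintype V] [DecidableEq V] (hG : G.IsAcyclic)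
    {σ : Perm V} (hσ : ∀ v, G.Adj v (σ v)) :
    Perm.sign σ = (-1) ^ (Fintype.card V / 2) := by
  have hsq : σ ^ 2 = 1 := Perm.ext (hG.involutive_of_forall_adj hσ)
  have hfix : Fintype.card (fixedPoints σ) = 0 :=
    Fintype.card_eq_zero_iff.2 ⟨fun ⟨v, hv⟩ => (hσ v).ne hv.symm⟩
  rw [Perm.sign_of_pow_two_eq_one hsq, hfix, Nat.sub_zero]

end Acyclic

section Determinant

variable [Fintype V] [DecidableEq V] [DecidableRel G.Adj] (R : Type*) [CommRing R]

theorem det_adjMatrix :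
    (G.adjMatrix R).det = ∑ σ : Perm V with ∀ v, G.Adj v (σ v), (Perm.sign σ : R) := by
  simp only [Matrix.det_apply, adjMatrix_apply, prod_boole, mem_univ, true_implies, sum_filter,
    adj_comm]
  refine sum_congr rfl fun σ _ => ?_
  split_ifs <;> simp [Units.smul_def]

theorem IsAcyclic.det_adjMatrix (hG : G.IsAcyclic) :
    (G.adjMatrix R).det = #{σ : Perm V | ∀ v, G.Adj v (σ v)} * (-1) ^ (Fintype.card V / 2) := by
  rw [G.det_adjMatrix, ← nsmul_eq_mul, ← sum_const]
  refine sum_congr rfl fun σ hσ => ?_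
  simp [hG.sign_eq_of_forall_adj (mem_filter.1 hσ).2]

end Determinant

section PerfectMatching

variable [Fintype V]

theorem forall_exists_mem_iff_card_eq_two_mul {M : Finset (Sym2 V)} (hMG : ↑M ⊆ G.edgeSet)
    (hM : ∀ e ∈ M, ∀ e' ∈ M, e ≠ e' → ∀ w : V, ¬(w ∈ e ∧ w ∈ e')) :
    (∀ v, ∃ e ∈ M, v ∈ e) ↔ Fintype.card V = 2 * #M := by
  have hdisj : (M : Set (Sym2 V)).PairwiseDisjoint Sym2.toFinset :=
    fun e he e' he' hne => Finset.disjoint_left.2 fun w hw hw' =>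
      hM e he e' he' hne w ⟨Sym2.mem_toFinset.1 hw, Sym2.mem_toFinset.1 hw'⟩
  have hcard : #(M.biUnion Sym2.toFinset) = 2 * #M := by
    rw [card_biUnion hdisj, sum_congr rfl fun e he => Sym2.card_toFinset_of_not_isDiag e
        (G.not_isDiag_of_mem_edgeSet (hMG he)),
      sum_const, smul_eq_mul, mul_comm]
  rw [← hcard, eq_comm, card_eq_iff_eq_univ, eq_univ_iff_forall]
  simp only [mem_biUnion, Sym2.mem_toFinset]

theorem exists_perfectMatching_of_involutive {f : V → V} (hf : Involutive f)
    (hG : ∀ v, G.Adj v (f v)) :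
    ∃ M : Finset (Sym2 V), ↑M ⊆ G.edgeSet ∧
      (∀ e ∈ M, ∀ e' ∈ M, e ≠ e' → ∀ w : V, ¬(w ∈ e ∧ w ∈ e')) ∧
      Fintype.card V = 2 * #M := by
  have hedge {v w : V} (hw : w ∈ s(v, f v)) : s(v, f v) = s(w, f w) := by
    rcases Sym2.mem_iff.1 hw with rfl | rfl
    · rfl
    · rw [hf v, Sym2.eq_swap]
  set M := univ.image fun v => s(v, f v)
  have hMG : ↑M ⊆ G.edgeSet := by
    intro e he
    obtain ⟨v, -, rfl⟩ := mem_image.1 he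
    exact hG v
  have hM : ∀ e ∈ M, ∀ e' ∈ M, e ≠ e' → ∀ w : V, ¬(w ∈ e ∧ w ∈ e') := by
    simp only [M, mem_image, mem_univ, true_and]
    rintro _ ⟨v, rfl⟩ _ ⟨v', rfl⟩ hne w ⟨hw, hw'⟩
    exact hne ((hedge hw).trans (hedge hw').symm)
  refine ⟨M, hMG, hM, (forall_exists_mem_iff_card_eq_two_mul hMG hM).1 fun v => ?_⟩
  exact ⟨s(v, f v), mem_image_of_mem _ (mem_univ v), Sym2.mem_mk_left _ _⟩

theorem exists_involutive_of_perfectMatching {M : Finset (Sym2 V)} (hMG : ↑M ⊆ G.edgeSet)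
    (hM : ∀ e ∈ M, ∀ e' ∈ M, e ≠ e' → ∀ w : V, ¬(w ∈ e ∧ w ∈ e'))
    (hcard : Fintype.card V = 2 * #M) :
    ∃ f : V → V, Involutive f ∧ ∀ v, G.Adj v (f v) := by
  choose e he hve using (forall_exists_mem_iff_card_eq_two_mul hMG hM).2 hcard
  have he_unique {v : V} {e' : Sym2 V} (he' : e' ∈ M) (hv : v ∈ e') : e' = e v := by
    by_contra hne
    exact hM e' he' (e v) (he v) hne v ⟨hv, hve v⟩
  set f : V → V := fun v => Sym2.Mem.other (hve v)
  have hspec (v : V) : s(v, f v) = e v := Sym2.other_spec (hve v)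
  have hadj (v : V) : G.Adj v (f v) := by
    rw [← mem_edgeSet, hspec]
    exact hMG (he v)
  refine ⟨f, fun v => ?_, hadj⟩
  have hfv : e (f v) = e v := (he_unique (he v) (Sym2.other_mem (hve v))).symm
  rw [← Sym2.congr_right (a := f v), hspec, hfv, ← hspec, Sym2.eq_swap]

end PerfectMatching

end SimpleGraph

/-- A finite tree has invertible (real) adjacency matrix if and only if it has a perfect
matching, i.e. a set `M` of pairwise vertex-disjoint edges with `|V| = 2|M|`. -/
theorem tree_adjMatrix_isUnit_iff_perfectMatching {V : Type*} [Fintype V] (T : SimpleGraph V)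
    (hT : T.IsTree) :
    IsUnit (T.adjMatrix ℝ) ↔
      ∃ M : Finset (Sym2 V), ↑M ⊆ T.edgeSet ∧
        (∀ e ∈ M, ∀ f ∈ M, e ≠ f → ∀ w : V, ¬(w ∈ e ∧ w ∈ f)) ∧
        Fintype.card V = 2 * M.card := by
  rw [Matrix.isUnit_iff_isUnit_det, isUnit_iff_ne_zero, hT.isAcyclic.det_adjMatrix ℝ,
    mul_ne_zero_iff, and_iff_left (pow_ne_zero _ (neg_ne_zero.2 one_ne_zero)),
    Nat.cast_ne_zero, card_ne_zero, filter_nonempty_iff]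
  constructor
  · rintro ⟨σ, -, hσ⟩
    exact SimpleGraph.exists_perfectMatching_of_involutive
      (hT.isAcyclic.involutive_of_forall_adj hσ) hσ
  · rintro ⟨M, hMT, hM, hcard⟩
    obtain ⟨f, hf, hadj⟩ := SimpleGraph.exists_involutive_of_perfectMatching hMT hM hcard
    exact ⟨hf.toPerm, mem_univ _, hadj⟩
end

section
/- Let G be a connected finite simple graph on n vertices with at least one edge. Then the rank over ℝ of the adjacency matrix of the line graph L(G) is at least n − 2. -/
attribute [local instance] Classical.propDecidable

/-!
Over `𝔽₂` the adjacency matrix of `L(G)` equals `BᵀB`, where `B` is the vertex–edge incidence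
matrix, because `BᵀB = A(L(G)) + 2I` over any ring. If `G` is connected, a vector `x` on the
vertices with `x u + x v = 0` along every edge is constant over `𝔽₂`, so `rank B ≥ n - 1`, and
Sylvester's rank inequality gives `rank_𝔽₂ A(L(G)) ≥ 2 (n - 1) - n = n - 2`. Finally, a
nonsingular minor modulo 2 is an odd integer, hence nonzero in `ℝ`, so the real rank is at least
the rank modulo 2.
-/

open Module Matrix

namespace Matrix

variable {l m n K : Type*} [Field K]

theorem rank_add_rank_le_rank_mul_add_card [Fintype m] [Fintype n]
    (A : Matrix l m K) (B : Matrix m n K) :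
    A.rank + B.rank ≤ (A * B).rank + Fintype.card m := by
  let g := A.mulVecLin.domRestrict (LinearMap.range B.mulVecLin)
  have hAB : (A * B).rank = finrank K (LinearMap.range g) := by
    rw [rank, mulVecLin_mul, LinearMap.range_comp, LinearMap.range_domRestrict]
  have hker : finrank K (LinearMap.ker g) ≤ finrank K (LinearMap.ker A.mulVecLin) := by
    rw [← Submodule.finrank_map_subtype_eq]
    refine Submodule.finrank_mono ?_
    rintro _ ⟨w, hw, rfl⟩
    exact hw
  have hg := g.finrank_range_add_finrank_ker
  have hA := A.mulVecLin.finrank_range_add_finrank_ker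
  rw [finrank_fintype_fun_eq_card] at hA
  rw [hAB]
  unfold rank
  omega

theorem exists_linearIndependent_row_comp [Finite m] [Fintype n] (A : Matrix m n K) :
    ∃ r : Fin A.rank → m, LinearIndependent K (A.row ∘ r) := by
  obtain ⟨κ, a, -, hspan, hli⟩ := exists_linearIndependent' K A.row
  have : Fintype κ := @Fintype.ofFinite κ hli.finite
  have hcard : Fintype.card κ = A.rank := by
    rw [rank_eq_finrank_span_row, ← hspan, finrank_span_eq_card hli]
  let e := Fintype.equivFinOfCardEq hcard
  exact ⟨a ∘ e.symm, hli.comp _ e.symm.injective⟩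

theorem exists_det_submatrix_ne_zero [Fintype m] [Fintype n] (A : Matrix m n K) :
    ∃ (r : Fin A.rank → m) (c : Fin A.rank → n), (A.submatrix r c).det ≠ 0 := by
  obtain ⟨r, hr⟩ := A.exists_linearIndependent_row_comp
  have hrank : (A.submatrix r id).rank = A.rank := by
    simpa using hr.rank_matrix (M := A.submatrix r id)
  have hcols := (A.submatrix r id)ᵀ.exists_linearIndependent_row_comp
  rw [rank_transpose, hrank] at hcols
  obtain ⟨c, hc⟩ := hcols
  refine ⟨r, c, fun h => ?_⟩
  have hunit : IsUnit (A.submatrix r c)ᵀ := linearIndependent_rows_iff_isUnit.1 hc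
  rw [isUnit_iff_isUnit_det, det_transpose, h] at hunit
  exact not_isUnit_zero hunit

theorem rank_map_intCast_le {F : Type*} [Field F] [CharZero K] [Fintype m] [Fintype n]
    (A : Matrix m n ℤ) : (A.map ((↑) : ℤ → F)).rank ≤ (A.map ((↑) : ℤ → K)).rank := by
  obtain ⟨r, c, hdet⟩ := (A.map ((↑) : ℤ → F)).exists_det_submatrix_ne_zero
  rw [submatrix_map, ← Int.cast_det] at hdet
  have hdetK : ((A.map ((↑) : ℤ → K)).submatrix r c).det ≠ 0 := by
    rw [submatrix_map, ← Int.cast_det, Int.cast_ne_zero]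
    exact fun h => hdet (by rw [h, Int.cast_zero])
  calc (A.map ((↑) : ℤ → F)).rank
      = ((A.map ((↑) : ℤ → K)).submatrix r c).rank := by
        rw [rank_of_det_ne_zero hdetK, Fintype.card_fin]
    _ ≤ (A.map ((↑) : ℤ → K)).rank := rank_submatrix_le _ _ _

end Matrix

namespace SimpleGraph

variable {V α β : Type*}

theorem adjMatrix_map (G : SimpleGraph V) [DecidableRel G.Adj] [Zero α] [One α] [Zero β] [One β]
    (f : α → β) (h₀ : f 0 = 0) (h₁ : f 1 = 1) : (G.adjMatrix α).map f = G.adjMatrix β := by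
  ext v w
  by_cases h : G.Adj v w <;> simp [adjMatrix_apply, h, h₀, h₁]

theorem Reachable.apply_eq_of_forall_adj {G : SimpleGraph V} {f : V → β}
    (hf : ∀ u v, G.Adj u v → f u = f v) {u v : V} (h : G.Reachable u v) : f u = f v := by
  obtain ⟨p⟩ := h
  induction p with
  | nil => rfl
  | cons huv _ ih => exact (hf _ _ huv).trans ih

variable {R : Type*} (G : SimpleGraph V) [DecidableEq V] [DecidableRel G.Adj]

theorem sum_incMatrix_mul_of_adj [Fintype V] [NonAssocSemiring R] {u v : V} (huv : G.Adj u v)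
    (g : V → R) : ∑ a, G.incMatrix R a s(u, v) * g a = g u + g v := by
  simp only [incMatrix_apply', mk'_mem_incidenceSet_iff, huv, true_and, ite_mul, one_mul,
    zero_mul]
  rw [Finset.sum_ite, Finset.sum_const_zero, add_zero, ← Finset.sum_pair huv.ne]
  congr 1
  ext a
  simp

variable (R) in
abbrev edgeIncMatrix [Zero R] [One R] : Matrix V G.edgeSet R := (G.incMatrix R).submatrix id (↑)

theorem edgeIncMatrix_apply [Zero R] [One R] (a : V) (e : G.edgeSet) :
    G.edgeIncMatrix R a e = if a ∈ (e : Sym2 V) then 1 else 0 := by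
  simp [incMatrix_apply', incidenceSet, e.2]

theorem transpose_edgeIncMatrix_mul_self [Fintype V] [NonAssocSemiring R]
    [DecidableRel G.lineGraph.Adj] :
    (G.edgeIncMatrix R)ᵀ * G.edgeIncMatrix R = G.lineGraph.adjMatrix R + 2 := by
  ext ⟨e, he⟩ f
  induction e using Sym2.ind with | h u v => ?_
  have huv : G.Adj u v := he
  simp only [mul_apply, transpose_apply, submatrix_apply, id, sum_incMatrix_mul_of_adj G huv]
  change G.edgeIncMatrix R u f + G.edgeIncMatrix R v f = _
  rw [edgeIncMatrix_apply, edgeIncMatrix_apply, Matrix.add_apply, adjMatrix_apply, ofNat_apply]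
  by_cases hef : ⟨s(u, v), he⟩ = f
  · subst hef
    simp [one_add_one_eq_two]
  · have hadj : G.lineGraph.Adj ⟨s(u, v), he⟩ f ↔ u ∈ (f : Sym2 V) ∨ v ∈ (f : Sym2 V) := by
      simp [lineGraph_adj_iff_exists, hef]
    have hboth : ¬ (u ∈ (f : Sym2 V) ∧ v ∈ (f : Sym2 V)) := by
      rw [Sym2.mem_and_mem_iff huv.ne]
      exact fun h => hef (Subtype.ext h.symm)
    by_cases hu : u ∈ (f : Sym2 V) <;> by_cases hv : v ∈ (f : Sym2 V) <;> simp_all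

theorem transpose_edgeIncMatrix_mul_self_of_charTwo [Fintype V] [Ring R] [CharP R 2]
    [DecidableRel G.lineGraph.Adj] :
    (G.edgeIncMatrix R)ᵀ * G.edgeIncMatrix R = G.lineGraph.adjMatrix R := by
  rw [transpose_edgeIncMatrix_mul_self, ← diagonal_ofNat, CharTwo.two_eq_zero, diagonal_zero,
    add_zero]

theorem card_sub_one_le_rank_edgeIncMatrix [Fintype V] [Fintype G.edgeSet] {F : Type*} [Field F]
    [CharP F 2] (hG : G.Connected) : Fintype.card V - 1 ≤ (G.edgeIncMatrix F).rank := by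
  have hker : LinearMap.ker (G.edgeIncMatrix F)ᵀ.mulVecLin ≤ Submodule.span F {1} := by
    intro x hx
    have hadj : ∀ u v, G.Adj u v → x u = x v := by
      intro u v huv
      have hzero := congrFun hx ⟨s(u, v), huv⟩
      simp only [mulVecLin_apply, mulVec, dotProduct, transpose_apply, submatrix_apply, id,
        sum_incMatrix_mul_of_adj G huv] at hzero
      exact CharTwo.add_eq_zero.1 hzero
    obtain ⟨r⟩ := hG.nonempty
    have hconst : x = x r • 1 := funext fun v => by
      simpa using (hG.preconnected v r).apply_eq_of_forall_adj hadj
    rw [hconst]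
    exact Submodule.smul_mem _ _ (Submodule.subset_span rfl)
  have hspan : finrank F (Submodule.span F {(1 : V → F)}) ≤ 1 := by
    simpa using finrank_span_le_card ({1} : Set (V → F))
  have hrn := (G.edgeIncMatrix F)ᵀ.mulVecLin.finrank_range_add_finrank_ker
  rw [finrank_fintype_fun_eq_card] at hrn
  have hkerdim := Submodule.finrank_mono hker
  rw [← rank_transpose]
  unfold rank
  omega

end SimpleGraph

theorem lineGraph_rank_ge_general {V : Type*} [Fintype V] (G : SimpleGraph V)
    (hconn : G.Connected) :
    Fintype.card V - 2 ≤ ((G.lineGraph).adjMatrix ℝ).rank := by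
  have hB := G.card_sub_one_le_rank_edgeIncMatrix (F := ZMod 2) hconn
  have hBB := rank_add_rank_le_rank_mul_add_card (G.edgeIncMatrix (ZMod 2))ᵀ
    (G.edgeIncMatrix (ZMod 2))
  rw [rank_transpose, G.transpose_edgeIncMatrix_mul_self_of_charTwo] at hBB
  calc Fintype.card V - 2 ≤ (G.lineGraph.adjMatrix (ZMod 2)).rank := by omega
    _ = ((G.lineGraph.adjMatrix ℤ).map ((↑) : ℤ → ZMod 2)).rank := by
        rw [G.lineGraph.adjMatrix_map _ Int.cast_zero Int.cast_one]
    _ ≤ ((G.lineGraph.adjMatrix ℤ).map ((↑) : ℤ → ℝ)).rank := rank_map_intCast_le _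
    _ = _ := by rw [G.lineGraph.adjMatrix_map _ Int.cast_zero Int.cast_one]

/-- For a connected finite simple graph `G` on `n` vertices with at least one edge, the rank
of the (real) adjacency matrix of the line graph `L(G)` is at least `n - 2`. -/
theorem lineGraph_rank_ge {V : Type*} [Fintype V] (G : SimpleGraph V)
    (hconn : G.Connected) (hE : G.edgeSet.Nonempty) :
    Fintype.card V - 2 ≤ ((G.lineGraph).adjMatrix ℝ).rank :=
  lineGraph_rank_ge_general G hconn
end

section
/- For n ≥ 3, the adjacency matrix over ℝ of the cycle graph C_n on n vertices is invertible if and only if n is not divisible by 4. -/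
/-!
Write `A` for the adjacency matrix of `C_n`, so `(A v) i = v (i - 1) + v (i + 1)`. Hence `A v = 0`
exactly when `v (i + 2) = -v i` for all `i`. Such a `v` takes the values `a, b, -a, -b, a, …` around
the cycle, which closes up consistently iff `4 ∣ n`. If `4 ∤ n`, some odd multiple of `2` vanishes
in `ℤ/n`, so `v = -v` and therefore `v = 0`.
-/

open Function Matrix
open scoped Fin.CommRing

theorem Function.Antiperiodic.eq_zero_of_odd_nsmul_eq_zero {α β : Type*} [AddMonoid α]
    [AddGroup β] [IsAddTorsionFree β] {f : α → β} {c : α} (h : Antiperiodic f c) {m : ℕ}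
    (hm : Odd m) (hc : m • c = 0) : f = 0 := by
  obtain ⟨k, rfl⟩ := hm
  funext x
  exact self_eq_neg.mp (by simpa [hc] using h.odd_nsmul_antiperiodic k x)

theorem Function.Antiperiodic.comp_val {β : Type*} [Neg β] {n : ℕ} {g : ℕ → β} {c : Fin n}
    (h : Antiperiodic g c) (hp : Periodic g n) : Antiperiodic (fun i : Fin n => g i) c :=
  fun i => by simp only [Fin.val_add, hp.map_mod_nat, h i]

theorem Fin.exists_odd_nsmul_two_eq_zero {n : ℕ} [NeZero n] (h4 : ¬ 4 ∣ n) :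
    ∃ m : ℕ, Odd m ∧ m • (2 : Fin n) = 0 := by
  suffices ∃ m : ℕ, Odd m ∧ n ∣ 2 * m by
    obtain ⟨m, hm, hdvd⟩ := this
    refine ⟨m, hm, ?_⟩
    rw [← Fin.natCast_eq_zero] at hdvd
    rw [nsmul_eq_mul, mul_comm]
    exact_mod_cast hdvd
  rcases n.even_or_odd with ⟨m, rfl⟩ | hn
  · exact ⟨m, Nat.not_even_iff_odd.mp fun ⟨k, hk⟩ => h4 ⟨k, by omega⟩, by rw [two_mul]⟩
  · exact ⟨n, hn, dvd_mul_left n 2⟩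

theorem Fin.exists_ne_zero_antiperiodic_two {R : Type*} [Ring R] [Nontrivial R] {n : ℕ}
    [NeZero n] (h4 : 4 ∣ n) : ∃ v : Fin n → R, v ≠ 0 ∧ Antiperiodic v 2 := by
  let g : ℕ → R := fun j => (-1) ^ (j / 2)
  have hg : Antiperiodic g 2 := fun j => by simp [g, Nat.add_div_right, pow_succ]
  have hgn : Periodic g n := by
    obtain ⟨t, rfl⟩ := h4
    simpa [mul_comm] using hg.periodic_two_mul.nat_mul t
  have h2 : (2 : Fin n).val = 2 := by
    have := Nat.le_of_dvd (NeZero.pos n) h4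
    simp only [Fin.coe_ofNat_eq_mod]
    exact Nat.mod_eq_of_lt (by omega)
  exact ⟨fun i => g i, fun h => by simpa [g] using congr_fun h 0, (h2 ▸ hg).comp_val hgn⟩

theorem Fin.exists_ne_zero_antiperiodic_two_iff {R : Type*} [Ring R] [IsAddTorsionFree R]
    [Nontrivial R] {n : ℕ} [NeZero n] : (∃ v : Fin n → R, v ≠ 0 ∧ Antiperiodic v 2) ↔ 4 ∣ n := by
  refine ⟨fun ⟨v, hv, hanti⟩ => ?_, exists_ne_zero_antiperiodic_two⟩
  by_contra h4
  obtain ⟨m, hm, hmc⟩ := exists_odd_nsmul_two_eq_zero h4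
  exact hv (hanti.eq_zero_of_odd_nsmul_eq_zero hm hmc)

namespace SimpleGraph

theorem cycleGraph_adjMatrix_mulVec_apply {R : Type*} [NonAssocSemiring R] {n : ℕ}
    (v : Fin (n + 3) → R) (i : Fin (n + 3)) :
    ((cycleGraph (n + 3)).adjMatrix R *ᵥ v) i = v (i - 1) + v (i + 1) := by
  have hne : i - 1 ≠ i + 1 := by
    simp [sub_eq_iff_eq_add, add_assoc, Fin.ext_iff, Fin.val_add, Nat.mod_eq_of_lt]
  rw [adjMatrix_mulVec_apply, cycleGraph_neighborFinset, Finset.sum_pair hne]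

theorem cycleGraph_adjMatrix_mulVec_eq_zero_iff {R : Type*} [Ring R] {n : ℕ}
    {v : Fin (n + 3) → R} : (cycleGraph (n + 3)).adjMatrix R *ᵥ v = 0 ↔ Antiperiodic v 2 := by
  simp only [funext_iff, Pi.zero_apply, cycleGraph_adjMatrix_mulVec_apply,
    add_eq_zero_iff_eq_neg']
  constructor
  · intro h i
    simpa [add_assoc, one_add_one_eq_two] using h (i + 1)
  · intro h i
    simpa [sub_add_eq_add_sub, ← one_add_one_eq_two, ← add_assoc] using h (i - 1)

end SimpleGraph

/-- For `n ≥ 3`, the adjacency matrix over ℝ of the cycle graph `C_n` is invertible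
if and only if `n` is not divisible by 4. -/
theorem cycleGraph_adjMatrix_isUnit_iff (n : ℕ) (hn : 3 ≤ n) :
    IsUnit ((SimpleGraph.cycleGraph n).adjMatrix ℝ) ↔ ¬ (4 ∣ n) := by
  obtain ⟨k, rfl⟩ : ∃ k, n = k + 3 := ⟨n - 3, by omega⟩
  rw [Matrix.isUnit_iff_isUnit_det, isUnit_iff_ne_zero, Ne, ← Matrix.exists_mulVec_eq_zero_iff,
    not_iff_not]
  simp only [SimpleGraph.cycleGraph_adjMatrix_mulVec_eq_zero_iff]
  exact Fin.exists_ne_zero_antiperiodic_two_iff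
end

section
/- Let A be an n×n symmetric matrix over the field GF(2) with zero diagonal (i.e., A is the adjacency matrix over GF(2) of a simple graph). If A is invertible, then n is even and the inverse matrix A⁻¹ is also symmetric with zero diagonal (hence A⁻¹ is again the adjacency matrix of a simple graph on the same vertex set). -/
/-!
Over a ring of characteristic 2, a double sum `∑ i, ∑ j, f i j` of a symmetric `f` vanishing on
the diagonal is zero, since the off-diagonal terms cancel in pairs. Taking
`f i j = A i j * A⁻¹ j i` gives `n = trace (A * A⁻¹) = 0` in `ZMod 2`, and taking
`f j k = B j i * A j k * B k i` shows that `Bᵀ * A * B` has zero diagonal; apply the latter to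
`B = A⁻¹`, for which `A⁻¹ = A⁻¹ᵀ * A * A⁻¹`.
-/

open Finset Matrix

variable {ι R : Type*} [Fintype ι]

theorem Finset.sum_sum_eq_zero_of_symm [Semiring R] [CharP R 2] (f : ι → ι → R) (hsymm : ∀ i j, f i j = f j i)
    (hdiag : ∀ i, f i i = 0) : ∑ i, ∑ j, f i j = 0 := by
  rw [← Fintype.sum_prod_type']
  refine sum_ninvolution Prod.swap (fun p => ?_) (fun p hp hswap => ?_) (by simp) (fun _ => rfl)
  · rw [Prod.fst_swap, Prod.snd_swap, hsymm p.2 p.1, CharTwo.add_self_eq_zero]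
  · obtain ⟨i, j⟩ := p
    obtain rfl : j = i := congrArg Prod.fst hswap
    exact hp (hdiag j)

namespace Matrix

variable [CommSemiring R] [CharP R 2]

theorem trace_mul_eq_zero_of_isSymm {A B : Matrix ι ι R} (hA : A.IsSymm) (hB : B.IsSymm)
    (hdiag : ∀ i, A i i = 0) : (A * B).trace = 0 :=
  sum_sum_eq_zero_of_symm _ (fun i j => by simp only [hA.apply i j, hB.apply j i])
    (by simp [hdiag])

theorem transpose_mul_mul_self_apply_self_eq_zero {A : Matrix ι ι R} (hA : A.IsSymm)
    (hdiag : ∀ i, A i i = 0) (B : Matrix ι ι R) (i : ι) : (Bᵀ * A * B) i i = 0 := by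
  simp only [mul_apply, transpose_apply, sum_mul]
  rw [sum_comm]
  exact sum_sum_eq_zero_of_symm _ (fun j k => by rw [hA.apply j k]; ring) (by simp [hdiag])

end Matrix

/-- If a symmetric matrix over GF(2) with zero diagonal (an adjacency matrix of a simple
graph over GF(2)) is invertible, then its size is even and its inverse is again symmetric
with zero diagonal. -/
theorem inv_adjMatrix_gf2 {n : ℕ} (A : Matrix (Fin n) (Fin n) (ZMod 2))
    (hsymm : A.IsSymm) (hdiag : ∀ i, A i i = 0) (hinv : IsUnit A) :
    Even n ∧ A⁻¹.IsSymm ∧ ∀ i, A⁻¹ i i = 0 := by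
  have hdet : IsUnit A.det := (isUnit_iff_isUnit_det A).mp hinv
  have hsymm_inv : A⁻¹.IsSymm := hsymm.inv
  refine ⟨?_, hsymm_inv, fun i => ?_⟩
  · have htrace : (A * A⁻¹).trace = 0 := trace_mul_eq_zero_of_isSymm hsymm hsymm_inv hdiag
    rw [mul_nonsing_inv A hdet, trace_one, Fintype.card_fin] at htrace
    exact ZMod.natCast_eq_zero_iff_even.mp htrace
  · have hsandwich : A⁻¹ᵀ * A * A⁻¹ = A⁻¹ := by
      rw [hsymm_inv.eq, mul_nonsing_inv_cancel_right _ _ hdet]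
    rw [← hsandwich]
    exact transpose_mul_mul_self_apply_self_eq_zero hsymm hdiag _ i
end

section
/- Local complementation and switching act transitively on the set of all simple graphs on a fixed finite vertex set: for any two simple graphs G and H on the vertex set {1,...,n}, there is a finite sequence of operations, each of which is either local complementation γ_i at some vertex i or switching s_i at some vertex i, transforming G into H. Equivalently, the reflexive-transitive closure of the relation relating G to γ_i(G) and to s_i(G) for every vertex i relates every pair of graphs on {1,...,n}. -/
/-!
Write `σ_a = γ_a ∘ s_a ∘ γ_a` (`conjSwitching`). It complements the edges at `a` and toggles a
pair `{k, l}` away from `a` exactly when `k` and `l` are both or neither adjacent to `a`. For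
`b ≠ a`, the graph `σ_a (s_b (σ_a G))` differs from `G` only in the pair `{a, b}`: the two
applications of `σ_a` toggle the same pairs away from `a`, except the pairs through `b` (whose
adjacency to `a` was flipped in between), and those are exactly the pairs `s_b` toggles. So
single edges can be toggled one at a time, which carries `G` to `H` through the edges of `G ∆ H`.
-/

/-- The local complement of `G` at the vertex `i`: the adjacency of each pair of distinct
vertices that both lie in the neighborhood of `i` is toggled; all other adjacencies are
unchanged. -/
def localComplement {V : Type*} (G : SimpleGraph V) (i : V) : SimpleGraph V where
  Adj k l := k ≠ l ∧ ¬ (G.Adj k l ↔ G.Adj i k ∧ G.Adj i l)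
  symm := by
    constructor
    rintro k l ⟨h1, h2⟩
    refine ⟨h1.symm, ?_⟩
    rw [G.adj_comm l k]
    tauto
  loopless := by constructor; rintro k ⟨h1, -⟩; exact h1 rfl

/-- The switching of `G` at the vertex `i`: the adjacency of every pair `{i, j}` with
`j ≠ i` is toggled; all edges not incident with `i` are unchanged. -/
def switching {V : Type*} (G : SimpleGraph V) (i : V) : SimpleGraph V where
  Adj k l := k ≠ l ∧ ¬ (G.Adj k l ↔ (k = i ∨ l = i))
  symm := by
    constructor
    rintro k l ⟨h1, h2⟩
    refine ⟨h1.symm, ?_⟩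
    rw [G.adj_comm l k]
    tauto
  loopless := by constructor; rintro k ⟨h1, -⟩; exact h1 rfl

open scoped symmDiff

namespace SimpleGraph

variable {V : Type*}

lemma symmDiff_adj (G H : SimpleGraph V) (v w : V) :
    (G ∆ H).Adj v w ↔ ¬ (G.Adj v w ↔ H.Adj v w) := by
  simp only [symmDiff_def, sup_adj, sdiff_adj]
  tauto

lemma fromEdgeSet_insert_of_notMem {e : Sym2 V} {s : Set (Sym2 V)} (he : e ∉ s) :
    fromEdgeSet (insert e s) = fromEdgeSet s ∆ fromEdgeSet {e} := by
  ext v w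
  simp only [symmDiff_adj, fromEdgeSet_adj, Set.mem_insert_iff, Set.mem_singleton_iff]
  rcases eq_or_ne s(v, w) e with rfl | h <;> tauto

end SimpleGraph

open SimpleGraph

variable {V : Type*}

@[simp]
lemma localComplement_adj (G : SimpleGraph V) (i k l : V) :
    (localComplement G i).Adj k l ↔ k ≠ l ∧ ¬ (G.Adj k l ↔ G.Adj i k ∧ G.Adj i l) := Iff.rfl

@[simp]
lemma switching_adj (G : SimpleGraph V) (i k l : V) :
    (switching G i).Adj k l ↔ k ≠ l ∧ ¬ (G.Adj k l ↔ (k = i ∨ l = i)) := Iff.rfl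

def conjSwitching (G : SimpleGraph V) (a : V) : SimpleGraph V :=
  localComplement (switching (localComplement G a) a) a

lemma conjSwitching_adj (G : SimpleGraph V) (a k l : V) :
    (conjSwitching G a).Adj k l ↔ k ≠ l ∧ (k = a ∨ l = a → ¬ G.Adj k l) ∧
      (k ≠ a → l ≠ a → ¬ (G.Adj k l ↔ (G.Adj a k ↔ G.Adj a l))) := by
  rcases eq_or_ne k l with rfl | hkl
  · simp
  simp only [conjSwitching, localComplement_adj, switching_adj]
  have haa : ¬ G.Adj a a := G.loopless.irrefl a
  by_cases hka : k = a <;> by_cases hla : l = a <;> simp_all [eq_comm (a := a), G.adj_comm _ a]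
  tauto

lemma conjSwitching_switching_conjSwitching (G : SimpleGraph V) {a b : V} (hab : a ≠ b) :
    conjSwitching (switching (conjSwitching G a) b) a = G ∆ edge a b := by
  ext k l
  rcases eq_or_ne k l with rfl | hkl
  · simp
  simp only [conjSwitching_adj, switching_adj, symmDiff_adj, edge_adj]
  have haa : ¬ G.Adj a a := G.loopless.irrefl a
  by_cases hka : k = a <;> by_cases hla : l = a <;> by_cases hkb : k = b <;> by_cases hlb : l = b <;>
    simp_all [eq_comm (a := a), G.adj_comm _ a] <;> tauto

def LCSwitchStep (G H : SimpleGraph V) : Prop :=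
  ∃ i, H = localComplement G i ∨ H = switching G i

lemma lcSwitchStep_localComplement (G : SimpleGraph V) (i : V) :
    LCSwitchStep G (localComplement G i) :=
  ⟨i, .inl rfl⟩

lemma lcSwitchStep_switching (G : SimpleGraph V) (i : V) : LCSwitchStep G (switching G i) :=
  ⟨i, .inr rfl⟩

open Relation

lemma reflTransGen_conjSwitching (G : SimpleGraph V) (a : V) :
    ReflTransGen LCSwitchStep G (conjSwitching G a) :=
  .tail (.tail (.single (lcSwitchStep_localComplement G a)) (lcSwitchStep_switching _ a))
    (lcSwitchStep_localComplement _ a)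

lemma reflTransGen_symmDiff_edge (G : SimpleGraph V) (a b : V) :
    ReflTransGen LCSwitchStep G (G ∆ edge a b) := by
  rcases eq_or_ne a b with rfl | hab
  · rw [edge_self_eq_bot, symmDiff_bot]
  rw [← conjSwitching_switching_conjSwitching G hab]
  exact ((reflTransGen_conjSwitching G a).tail (lcSwitchStep_switching _ b)).trans
    (reflTransGen_conjSwitching _ a)

lemma reflTransGen_symmDiff_fromEdgeSet {s : Set (Sym2 V)} (hs : s.Finite) (G : SimpleGraph V) :
    ReflTransGen LCSwitchStep G (G ∆ fromEdgeSet s) := by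
  induction s, hs using Set.Finite.induction_on generalizing G with
  | empty => rw [fromEdgeSet_empty, symmDiff_bot]
  | @insert e s he _ ih =>
    induction e using Sym2.ind with
    | h a b =>
      rw [fromEdgeSet_insert_of_notMem he, ← symmDiff_assoc]
      exact (ih G).trans (reflTransGen_symmDiff_edge _ a b)

theorem reflTransGen_lcSwitchStep [Finite V] (G H : SimpleGraph V) :
    ReflTransGen LCSwitchStep G H := by
  simpa only [fromEdgeSet_edgeSet, symmDiff_symmDiff_cancel_left] using
    reflTransGen_symmDiff_fromEdgeSet (G ∆ H).edgeSet.toFinite G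

/-- Local complementation and switching act transitively on the set of all simple graphs
on the vertex set `{1, ..., n}`: any graph can be transformed into any other by a finite
sequence of local complementations and switchings. -/
theorem localComplement_switching_transitive (n : ℕ) (G H : SimpleGraph (Fin n)) :
    Relation.ReflTransGen
      (fun G' H' : SimpleGraph (Fin n) =>
        ∃ i : Fin n, H' = localComplement G' i ∨ H' = switching G' i) G H :=
  reflTransGen_lcSwitchStep G H
end

section
/- Let G be a finite simple graph on vertex set V, let S ⊆ V, and let G_S be the graph obtained from G by switching at the set S, i.e., for every pair {k,l} with exactly one of k, l in S the adjacency is toggled, and all other adjacencies are unchanged. If G has a proper vertex coloring with k colors, then G_S has a proper vertex coloring with 2k colors; in particular the chromatic number satisfies χ(G_S) ≤ 2·χ(G). -/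
/-! Pairs of vertices on the same side of `S` keep their adjacency under switching. So refining
a proper coloring `c` of `G` by the side of `S`, i.e. colouring `v` by `(c v, v ∈ S)`, is a proper
coloring of `G_S`: equally coloured vertices lie on the same side, so they could only be adjacent
in `G_S` if they were adjacent in `G`, which `c` forbids. -/

/-- Switching a graph `G` at a set `S` of vertices: the adjacency of every pair with exactly
one endpoint in `S` is toggled; all other adjacencies are unchanged. -/
def setSwitching {V : Type*} (G : SimpleGraph V) (S : Set V) : SimpleGraph V where
  Adj k l := k ≠ l ∧ ¬ (G.Adj k l ↔ Xor' (k ∈ S) (l ∈ S))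
  symm := by
    constructor
    rintro k l ⟨h1, h2⟩
    refine ⟨h1.symm, ?_⟩
    rw [G.adj_comm l k]
    unfold Xor' at *
    simp only [xor_def] at *
    tauto
  loopless := by constructor; rintro k ⟨h1, -⟩; exact h1 rfl

namespace SimpleGraph

variable {V α : Type*} {G : SimpleGraph V} {S : Set V} {u v : V}

theorem setSwitching_adj_iff_of_mem_iff (h : u ∈ S ↔ v ∈ S) :
    (setSwitching G S).Adj u v ↔ G.Adj u v := by
  have hxor : ¬Xor (u ∈ S) (v ∈ S) := (not_xor _ _).mpr h
  exact ⟨fun ⟨_, hG⟩ => by tauto, fun hG => ⟨hG.ne, by tauto⟩⟩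

def Coloring.setSwitching (C : G.Coloring α) (S : Set V) [DecidablePred (· ∈ S)] :
    (setSwitching G S).Coloring (α × Bool) :=
  Coloring.mk (fun v => (C v, decide (v ∈ S))) fun {u v} hadj heq => by
    have hS : u ∈ S ↔ v ∈ S := by simpa using congrArg Prod.snd heq
    exact C.valid ((setSwitching_adj_iff_of_mem_iff hS).mp hadj) (congrArg Prod.fst heq)

theorem Colorable.setSwitching {k : ℕ} (h : G.Colorable k) (S : Set V) :
    (setSwitching G S).Colorable (2 * k) := by
  classical
  obtain ⟨C⟩ := h
  simpa [mul_comm] using (C.setSwitching S).colorable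

theorem chromaticNumber_le_mul_of_forall_colorable {V' : Type*} {G' : SimpleGraph V'} {m : ℕ}
    (hm : m ≠ 0) (h : ∀ n, G'.Colorable n → G.Colorable (m * n)) :
    G.chromaticNumber ≤ m * G'.chromaticNumber := by
  obtain hG' | hG' := eq_or_ne G'.chromaticNumber ⊤
  · simp [hG', ENat.mul_top (Nat.cast_ne_zero.mpr hm)]
  obtain ⟨n, hn⟩ := ENat.ne_top_iff_exists.mp hG'
  have hG'n : G'.Colorable n := chromaticNumber_le_iff_colorable.mp hn.ge
  calc G.chromaticNumber ≤ (m * n : ℕ) := (h n hG'n).chromaticNumber_le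
    _ = m * G'.chromaticNumber := by rw [← hn, Nat.cast_mul]

end SimpleGraph

/-- If `G` has a proper `k`-coloring then any switching of `G` at a set `S` has a proper
`2k`-coloring; in particular `χ(G_S) ≤ 2 χ(G)`. -/
theorem setSwitching_colorable {V : Type*} (G : SimpleGraph V) (S : Set V) (k : ℕ)
    (h : G.Colorable k) :
    (setSwitching G S).Colorable (2 * k) ∧
    (setSwitching G S).chromaticNumber ≤ 2 * G.chromaticNumber :=
  ⟨h.setSwitching S,
    SimpleGraph.chromaticNumber_le_mul_of_forall_colorable two_ne_zero fun _ hn => hn.setSwitching S⟩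
end
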